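/- arXiv:2510.18718 — 13 statements merged into one kernel-verified Lean document; each statement's English description precedes it below -/
import Mathlib

section
/- For every integer k ≥ 3, the set of x ∈ [0,1] satisfying k·(2x(1−x)^k + k·x²·(1−x)^{k−1}) = 1 is nonempty and has a greatest element p₂*, and this p₂* satisfies 1/k < p₂* < min{1, 5/k}. -/
/-!
Write `f(x)` for the left-hand side. Since `(1 - 1/k)^(k-1) ≥ e⁻¹`, `f(1/k) > 1`, while `f(1) = 0`;
so the intermediate value theorem gives a solution in `(1/k, 1)`, and the solution set is compact.
On `[2/(k+1), 1]`, `f` is a positive combination of `x(1-x)^k` and `x²(1-x)^(k-1)`, both past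
their maxima there, so for `x ≥ 5/k` we get `f(x) ≤ f(5/k) ≤ 35 (1 - 5/k)^(k-1) ≤ 35 e⁻⁴ < 1`.
-/

open Real Set

theorem antitoneOn_pow_mul_one_sub_pow (m n : ℕ) :
    AntitoneOn (fun x : ℝ => x ^ m * (1 - x) ^ n) (Icc ((m : ℝ) / (m + n)) 1) := by
  refine antitoneOn_of_hasDerivWithinAt_nonpos (convex_Icc _ _) (by fun_prop)
    (f' := fun x => m * x ^ (m - 1) * (1 - x) ^ n - x ^ m * (n * (1 - x) ^ (n - 1)))
    (fun x _ => ?_) (fun x hx => ?_)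
  · have h : HasDerivAt (fun y : ℝ => y ^ m * (1 - y) ^ n)
        (m * x ^ (m - 1) * (1 - x) ^ n + x ^ m * (n * (1 - x) ^ (n - 1) * -1)) x :=
      (hasDerivAt_pow m x).mul (((hasDerivAt_id' x).const_sub 1).pow n)
    exact h.hasDerivWithinAt.congr_deriv (by ring)
  · rw [interior_Icc] at hx
    obtain ⟨hmx, hx1⟩ := hx
    have hx0 : 0 < x := lt_of_le_of_lt (by positivity) hmx
    have hm : (m : ℝ) * x ^ (m - 1) * x = m * x ^ m := by
      cases m <;> simp [pow_succ, mul_assoc]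
    have hn : (n : ℝ) * (1 - x) ^ (n - 1) * (1 - x) = n * (1 - x) ^ n := by
      cases n <;> simp [pow_succ, mul_assoc]
    have hmn : (m : ℝ) ≤ (m + n) * x := by
      rcases Nat.eq_zero_or_pos (m + n) with h | h
      · obtain rfl : m = 0 := by omega
        obtain rfl : n = 0 := by omega
        simp
      · rw [div_lt_iff₀ (by exact_mod_cast h)] at hmx
        linarith
    have key : (m * x ^ (m - 1) * (1 - x) ^ n - x ^ m * (n * (1 - x) ^ (n - 1))) * (x * (1 - x))
        = x ^ m * (1 - x) ^ n * (m - (m + n) * x) := by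
      linear_combination (1 - x) ^ n * (1 - x) * hm - x ^ m * x * hn
    refine nonpos_of_mul_nonpos_left ?_ (mul_pos hx0 (sub_pos.2 hx1))
    rw [key]
    exact mul_nonpos_of_nonneg_of_nonpos (by positivity) (by linarith)

theorem exp_neg_one_le_one_sub_inv_pow (n : ℕ) : exp (-1) ≤ (1 - ((n : ℝ) + 1)⁻¹) ^ n := by
  rcases Nat.eq_zero_or_pos n with rfl | hn
  · simp
  have hn' : (0 : ℝ) < n := by exact_mod_cast hn
  have h : 1 - ((n : ℝ) + 1)⁻¹ = (1 + (n : ℝ)⁻¹)⁻¹ := by field_simp; ring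
  rw [h, inv_pow, exp_neg]
  exact inv_anti₀ (by positivity) one_add_inv_pow_le_exp

theorem one_sub_five_div_pow_pred_le_exp_neg_four {k : ℕ} (hk : 5 ≤ k) :
    (1 - 5 / (k : ℝ)) ^ (k - 1) ≤ exp (-4) := by
  have hk' : (5 : ℝ) ≤ k := by exact_mod_cast hk
  have hcast : ((k - 1 : ℕ) : ℝ) = k - 1 := by rw [Nat.cast_sub (by omega)]; simp
  calc (1 - 5 / (k : ℝ)) ^ (k - 1) ≤ exp (-(5 / k)) ^ (k - 1) := by
        gcongr
        · rw [sub_nonneg, div_le_one (by linarith)]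
          exact hk'
        · exact one_sub_le_exp_neg _
    _ = exp (-(5 / k * (k - 1))) := by rw [← exp_nat_mul, hcast]; ring_nf
    _ ≤ exp (-4) := by
        gcongr
        have h5 : 5 / (k : ℝ) ≤ 1 := by rw [div_le_one (by linarith)]; exact hk'
        rw [mul_sub, div_mul_cancel₀ _ (by positivity), mul_one]
        linarith

def p2Poly (k : ℕ) (x : ℝ) : ℝ := k * (2 * x * (1 - x) ^ k + k * x ^ 2 * (1 - x) ^ (k - 1))

theorem continuous_p2Poly (k : ℕ) : Continuous (p2Poly k) := by
  unfold p2Poly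
  fun_prop

theorem p2Poly_one {k : ℕ} (hk : 2 ≤ k) : p2Poly k 1 = 0 := by
  simp [p2Poly, zero_pow (by omega : k ≠ 0), zero_pow (by omega : k - 1 ≠ 0)]

theorem p2Poly_eq_pow_pred_mul {k : ℕ} (hk : 1 ≤ k) (x : ℝ) :
    p2Poly k x = k * x * (1 - x) ^ (k - 1) * (2 * (1 - x) + k * x) := by
  obtain ⟨j, rfl⟩ : ∃ j, k = j + 1 := ⟨k - 1, by omega⟩
  simp only [p2Poly, Nat.add_sub_cancel, pow_succ]
  ring

theorem p2Poly_antitoneOn {k : ℕ} (hk : 1 ≤ k) :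
    AntitoneOn (p2Poly k) (Icc (2 / (k + 1)) 1) := by
  intro x hx y hy hxy
  have hcast : ((2 : ℕ) : ℝ) / ((2 : ℕ) + ((k - 1 : ℕ) : ℝ)) = 2 / (k + 1) := by
    rw [Nat.cast_sub hk]; push_cast; ring_nf
  have hsub : Icc (2 / ((k : ℝ) + 1)) 1 ⊆ Icc (((1 : ℕ) : ℝ) / ((1 : ℕ) + (k : ℝ))) 1 :=
    Icc_subset_Icc_left (by rw [add_comm]; gcongr <;> norm_num)
  have h₁ := antitoneOn_pow_mul_one_sub_pow 1 k (hsub hx) (hsub hy) hxy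
  have h₂ := antitoneOn_pow_mul_one_sub_pow 2 (k - 1) (hcast ▸ hx) (hcast ▸ hy) hxy
  simp only [pow_one] at h₁ h₂
  have e : ∀ z, p2Poly k z = 2 * k * (z * (1 - z) ^ k) + k ^ 2 * (z ^ 2 * (1 - z) ^ (k - 1)) := by
    intro z; unfold p2Poly; ring
  rw [e, e]
  gcongr

theorem one_lt_p2Poly_inv {k : ℕ} (hk : 3 ≤ k) : 1 < p2Poly k (1 / k) := by
  rw [p2Poly_eq_pow_pred_mul (by omega)]
  rcases le_or_gt k 7 with hk7 | hk7
  -- the bound `e⁻¹ (3 - 2/k) > 1` needs `k ≥ 8`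
  · interval_cases k <;> norm_num
  have hk8 : (8 : ℝ) ≤ k := by exact_mod_cast hk7
  have hcast : ((k - 1 : ℕ) : ℝ) + 1 = k := by rw [Nat.cast_sub (by omega)]; simp
  have hexp := exp_neg_one_le_one_sub_inv_pow (k - 1)
  rw [hcast, ← one_div] at hexp
  have h8 : 1 / (k : ℝ) ≤ 1 / 8 := one_div_le_one_div_of_le (by norm_num) hk8
  rw [mul_one_div_cancel (by positivity), one_mul]
  nlinarith [exp_neg_one_gt_d9]

theorem p2Poly_five_div_lt_one {k : ℕ} (hk : 5 ≤ k) : p2Poly k (5 / k) < 1 := by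
  rw [p2Poly_eq_pow_pred_mul (by omega)]
  have hk' : (5 : ℝ) ≤ k := by exact_mod_cast hk
  have h5 : 5 / (k : ℝ) ≤ 1 := by rw [div_le_one (by linarith)]; exact hk'
  have hpow := one_sub_five_div_pow_pred_le_exp_neg_four hk
  have hexp : exp (-4) < 1 / 35 := by
    calc exp (-4) = exp (-1) ^ 4 := by rw [← exp_nat_mul]; norm_num
      _ < 0.3678794412 ^ 4 := by gcongr; exact exp_neg_one_lt_d9
      _ < 1 / 35 := by norm_num
  have h0 : 0 ≤ 1 - 5 / (k : ℝ) := sub_nonneg.2 h5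
  rw [mul_div_cancel₀ _ (by positivity)]
  calc 5 * (1 - 5 / (k : ℝ)) ^ (k - 1) * (2 * (1 - 5 / k) + 5)
      ≤ 5 * (1 - 5 / (k : ℝ)) ^ (k - 1) * 7 := by
        gcongr
        linarith [show (0 : ℝ) ≤ 5 / k by positivity]
    _ ≤ 35 * exp (-4) := by linarith
    _ < 1 := by linarith

theorem p2star_exists_and_bounds (k : ℕ) (hk : 3 ≤ k) :
    ∃ p2 : ℝ,
      IsGreatest {x : ℝ | x ∈ Set.Icc (0:ℝ) 1 ∧
        (k:ℝ) * (2 * x * (1-x)^k + (k:ℝ) * x^2 * (1-x)^(k-1)) = 1} p2 ∧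
      1 / (k:ℝ) < p2 ∧ p2 < min 1 (5 / (k:ℝ)) := by
  have hk₀ : (0 : ℝ) < k := by positivity
  have hinv : 1 / (k : ℝ) ≤ 1 := by rw [div_le_one hk₀]; exact_mod_cast (by omega : 1 ≤ k)
  obtain ⟨x₀, ⟨hx₀k, hx₀1⟩, hx₀⟩ := intermediate_value_Ioo' hinv
    (continuous_p2Poly k).continuousOn ⟨by rw [p2Poly_one (by omega)]; norm_num,
      one_lt_p2Poly_inv hk⟩
  have hx₀S : x₀ ∈ {x | x ∈ Icc 0 1 ∧ p2Poly k x = 1} :=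
    ⟨⟨(by positivity : (0 : ℝ) ≤ 1 / k).trans hx₀k.le, hx₀1.le⟩, hx₀⟩
  have hcompact : IsCompact {x | x ∈ Icc 0 1 ∧ p2Poly k x = 1} :=
    isCompact_Icc.inter_right (isClosed_eq (continuous_p2Poly k) continuous_const)
  obtain ⟨p, hpS, hmax⟩ := hcompact.exists_isGreatest ⟨x₀, hx₀S⟩
  have hp₁ : p ≤ 1 := hpS.1.2
  have hp_lt_one : p < 1 :=
    hp₁.lt_of_ne (by rintro rfl; simpa [p2Poly_one (by omega : 2 ≤ k)] using hpS.2)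
  refine ⟨p, ⟨hpS, hmax⟩, hx₀k.trans_le (hmax hx₀S), lt_min hp_lt_one ?_⟩
  by_contra! h5p
  have hk5 : 5 ≤ k := by
    by_contra! hk5
    have : (1 : ℝ) ≤ 5 / k := by rw [one_le_div hk₀]; exact_mod_cast hk5.le
    linarith
  have hmem : 5 / (k : ℝ) ∈ Icc (2 / ((k : ℝ) + 1)) 1 :=
    ⟨by gcongr <;> linarith, h5p.trans hp₁⟩
  have := p2Poly_antitoneOn (by omega : 1 ≤ k) hmem ⟨hmem.1.trans h5p, hp₁⟩ h5p
  linarith [p2Poly_five_div_lt_one hk5, hpS.2]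
end

section
/- Let k ≥ 2 and 1 ≤ ℓ ≤ k be integers and let p ∈ (0,1] be a real number with p^ℓ ≥ ℓ/k. Then there exists a smallest positive integer t_ℓ such that ∑_{t=0}^{t_ℓ} C(k,t)·p^{ℓ+t}·(1−p)^{k−t} ≥ ℓ/k, this t_ℓ satisfies t_ℓ ≤ k, and U_{k,ℓ,p}(t_ℓ) = max over integers T with 1 ≤ T ≤ k of U_{k,ℓ,p}(T). -/
open Finset

/-- `U_{k,ℓ,p}(T) = T − (k/ℓ)·∑_{t=0}^{T} (T−t)·C(k,t)·p^{ℓ+t}·(1−p)^{k−t}`. -/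
noncomputable def Ufun (k ℓ : ℕ) (p : ℝ) (T : ℕ) : ℝ :=
  (T : ℝ) - ((k : ℝ) / (ℓ : ℝ)) * ∑ t ∈ Finset.range (T + 1),
    ((T : ℝ) - (t : ℝ)) * (Nat.choose k t : ℝ) * p ^ (ℓ + t) * (1 - p) ^ (k - t)

noncomputable def Sfun (k ℓ : ℕ) (p : ℝ) (T : ℕ) : ℝ :=
  ∑ t ∈ Finset.range (T + 1), (Nat.choose k t : ℝ) * p ^ (ℓ + t) * (1 - p) ^ (k - t)

lemma Ufun_succ (k ℓ : ℕ) (p : ℝ) (T : ℕ) :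
    Ufun k ℓ p (T + 1) = Ufun k ℓ p T + (1 - ((k : ℝ) / (ℓ : ℝ)) * Sfun k ℓ p T) := by
  unfold Ufun Sfun
  rw [Finset.sum_range_succ]
  push_cast
  rw [show ∑ t ∈ range (T + 1), ((T : ℝ) + 1 - t) * (Nat.choose k t : ℝ) * p ^ (ℓ + t) * (1 - p) ^ (k - t)
      = ∑ t ∈ range (T + 1), (((T : ℝ) - t) * (Nat.choose k t : ℝ) * p ^ (ℓ + t) * (1 - p) ^ (k - t)
        + (Nat.choose k t : ℝ) * p ^ (ℓ + t) * (1 - p) ^ (k - t)) from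
      Finset.sum_congr rfl (fun t _ => by ring)]
  rw [Finset.sum_add_distrib]
  ring

theorem tl_exists_and_U_max (k ℓ : ℕ) (hk : 2 ≤ k) (hℓ1 : 1 ≤ ℓ) (hℓk : ℓ ≤ k)
    (p : ℝ) (hp : p ∈ Set.Ioc (0:ℝ) 1) (hpl : (ℓ:ℝ) / (k:ℝ) ≤ p ^ ℓ) :
    ∃ tl : ℕ, 1 ≤ tl ∧
      ((ℓ:ℝ) / (k:ℝ) ≤ ∑ t ∈ Finset.range (tl + 1),
          (Nat.choose k t : ℝ) * p ^ (ℓ + t) * (1 - p) ^ (k - t)) ∧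
      (∀ t' : ℕ, 1 ≤ t' →
        ((ℓ:ℝ) / (k:ℝ) ≤ ∑ t ∈ Finset.range (t' + 1),
            (Nat.choose k t : ℝ) * p ^ (ℓ + t) * (1 - p) ^ (k - t)) →
        tl ≤ t') ∧
      tl ≤ k ∧
      (∀ T : ℕ, 1 ≤ T → T ≤ k → Ufun k ℓ p T ≤ Ufun k ℓ p tl) := by
  classical
  obtain ⟨hp0, hp1⟩ := hp
  have h1p : (0:ℝ) ≤ 1 - p := by linarith
  have hℓ0 : (0:ℝ) < (ℓ : ℝ) := by exact_mod_cast hℓ1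
  have hk0 : (0:ℝ) < (k : ℝ) := by positivity
  have ha0 : ∀ t : ℕ, 0 ≤ (Nat.choose k t : ℝ) * p ^ (ℓ + t) * (1 - p) ^ (k - t) := by
    intro t
    apply mul_nonneg (mul_nonneg (by positivity) (by positivity)) (pow_nonneg h1p _)
  have hS_mono : ∀ {m n : ℕ}, m ≤ n → Sfun k ℓ p m ≤ Sfun k ℓ p n := by
    intro m n hmn
    apply Finset.sum_le_sum_of_subset_of_nonneg
    · exact Finset.range_subset_range.2 (by omega)
    · intro t _ _; exact ha0 t
  -- S k = p ^ ℓ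
  have hSk : Sfun k ℓ p k = p ^ ℓ := by
    unfold Sfun
    have := add_pow p (1 - p) k
    have hsum : ∑ t ∈ range (k + 1), p ^ t * (1 - p) ^ (k - t) * (Nat.choose k t : ℝ) = 1 := by
      rw [← this]; norm_num
    calc ∑ t ∈ range (k + 1), (Nat.choose k t : ℝ) * p ^ (ℓ + t) * (1 - p) ^ (k - t)
        = p ^ ℓ * ∑ t ∈ range (k + 1), p ^ t * (1 - p) ^ (k - t) * (Nat.choose k t : ℝ) := by
          rw [Finset.mul_sum]
          exact Finset.sum_congr rfl (fun t _ => by rw [pow_add]; ring)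
      _ = p ^ ℓ := by rw [hsum, mul_one]
  have hPk : ∃ t : ℕ, 1 ≤ t ∧ (ℓ:ℝ) / (k:ℝ) ≤ Sfun k ℓ p t :=
    ⟨k, by omega, by rw [hSk]; exact hpl⟩
  set tl := Nat.find hPk with htl
  obtain ⟨htl1, htlS⟩ := Nat.find_spec hPk
  have htlk : tl ≤ k := Nat.find_min' hPk ⟨by omega, by rw [hSk]; exact hpl⟩
  have hbelow : ∀ m : ℕ, 1 ≤ m → m < tl → Sfun k ℓ p m < (ℓ:ℝ) / (k:ℝ) := by
    intro m hm1 hmtl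
    by_contra hcon
    push_neg at hcon
    exact absurd (Nat.find_min' hPk ⟨hm1, hcon⟩) (by omega)
  have hkl1 : ((k:ℝ) / (ℓ:ℝ)) * ((ℓ:ℝ) / (k:ℝ)) = 1 := by field_simp
  have hkl0 : (0:ℝ) < (k:ℝ) / (ℓ:ℝ) := by positivity
  refine ⟨tl, htl1, htlS, fun t' ht'1 ht'S => Nat.find_min' hPk ⟨ht'1, ht'S⟩, htlk, ?_⟩
  -- up: for 1 ≤ T ≤ tl, U T ≤ U tl
  have hup : ∀ T : ℕ, 1 ≤ T → T ≤ tl → Ufun k ℓ p T ≤ Ufun k ℓ p tl := by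
    intro T hT1 hTtl
    have : ∀ n : ℕ, T ≤ n → n ≤ tl → Ufun k ℓ p T ≤ Ufun k ℓ p n := by
      intro n hn
      induction n, hn using Nat.le_induction with
      | base => intro _; exact le_refl _
      | succ n hn ih =>
        intro hn1
        have hnlt : n < tl := by omega
        have hSlt : Sfun k ℓ p n < (ℓ:ℝ) / (k:ℝ) := hbelow n (by omega) hnlt
        have : ((k:ℝ)/(ℓ:ℝ)) * Sfun k ℓ p n < 1 := by
          have h3 : ((k:ℝ)/(ℓ:ℝ)) * Sfun k ℓ p n < ((k:ℝ)/(ℓ:ℝ)) * ((ℓ:ℝ)/(k:ℝ)) :=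
            mul_lt_mul_of_pos_left hSlt hkl0
          linarith [hkl1]
        have h2 := ih (by omega)
        rw [Ufun_succ]
        linarith
    exact this tl hTtl (le_refl _)
  -- down: for tl ≤ T, U T ≤ U tl
  have hdown : ∀ T : ℕ, tl ≤ T → Ufun k ℓ p T ≤ Ufun k ℓ p tl := by
    intro T hT
    induction T, hT using Nat.le_induction with
    | base => exact le_refl _
    | succ n hn ih =>
      have hSge : (ℓ:ℝ) / (k:ℝ) ≤ Sfun k ℓ p n := le_trans htlS (hS_mono hn)
      have : 1 ≤ ((k:ℝ)/(ℓ:ℝ)) * Sfun k ℓ p n := by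
        have h3 : ((k:ℝ)/(ℓ:ℝ)) * ((ℓ:ℝ)/(k:ℝ)) ≤ ((k:ℝ)/(ℓ:ℝ)) * Sfun k ℓ p n :=
          mul_le_mul_of_nonneg_left hSge (le_of_lt hkl0)
        linarith [hkl1]
      rw [Ufun_succ]
      linarith
  intro T hT1 _
  rcases le_or_gt T tl with h | h
  · exact hup T hT1 h
  · exact hdown T (le_of_lt h)
end

section
/- For all integers 2 ≤ ℓ < k and every real number p with (ℓ/k)^{1/ℓ} ≤ p ≤ 1, one has (k·p^ℓ/ℓ)·∑_{t=0}^{ℓ} (ℓ+1−t)·C(k,t)·p^t·(1−p)^{k−t} < 1; equivalently, U_{k,ℓ,p}(ℓ+1) > ℓ. -/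
open Finset

/-!
Write `X ∼ Bin(k, p)`, so that the claim reads `k p^ℓ 𝔼[(ℓ + 1 - X)⁺] < ℓ`. For a suitable shift
`s ≥ 1` with `ℓ + s ≤ k`, the `t`-th term of this sum (`t ≤ ℓ`) is at most `ℓ · P(X = s + t)`.
The points `s, …, s + ℓ` avoid `0`, so the whole sum is at most `ℓ (1 - (1 - p)^k) < ℓ` when
`p < 1` (for `p = 1` it vanishes). Each termwise comparison is a binomial-coefficient inequality
combined with `k p^ℓ ≥ ℓ`:
* for `k > 2ℓ` take `s = ℓ` and use `4 p (1 - p) ≤ 1`;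
* for `k ≤ 2ℓ` take `s = k - ℓ` and use `ℓ (1 - p) p^ℓ ≤ p (1 - p^ℓ)`, except for
  `(k, ℓ) = (4, 2)`, where `s = 1` works.
-/

open scoped Nat

namespace Nat

theorem two_pow_le_factorial {n : ℕ} (hn : 4 ≤ n) : 2 ^ n ≤ n ! := by
  induction n, hn using Nat.le_induction with
  | base => decide
  | succ n hn ih =>
    rw [pow_succ, factorial_succ, mul_comm (n + 1)]
    exact Nat.mul_le_mul ih (by omega)

theorem sq_mul_choose_le_mul_choose_two_mul {k ℓ : ℕ} (hℓ : 2 ≤ ℓ) (hk : 2 * ℓ < k) :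
    k ^ 2 * k.choose ℓ ≤ ℓ ^ 2 * 4 ^ ℓ * k.choose (2 * ℓ) := by
  induction k, hk using Nat.le_induction with
  | base =>
    rw [choose_succ_self_right]
    rcases hℓ.eq_or_lt with rfl | hℓ
    · decide
    calc (2 * ℓ + 1) ^ 2 * (2 * ℓ + 1).choose ℓ
        = (2 * ℓ + 1) * ((2 * ℓ + 1) * (2 * ℓ + 1).choose ℓ) := by ring
      _ ≤ (2 * ℓ + 1) * (ℓ ^ 2 * 4 ^ ℓ) := by
          gcongr
          · nlinarith
          · exact choose_middle_le_pow ℓ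
      _ = ℓ ^ 2 * 4 ^ ℓ * (2 * ℓ + 1) := by ring
  | succ k hk ih =>
    have hℓk := choose_mul_succ_eq k ℓ
    have h2ℓk := choose_mul_succ_eq k (2 * ℓ)
    have hpoly : (k + 1) ^ 2 * (k + 1 - 2 * ℓ) ≤ k ^ 2 * (k + 1 - ℓ) := by
      zify [show 2 * ℓ ≤ k + 1 by omega, show ℓ ≤ k + 1 by omega]
      nlinarith
    have hpos : 0 < (k + 1 - ℓ) * (k + 1 - 2 * ℓ) * (k + 1) :=
      Nat.mul_pos (Nat.mul_pos (by omega) (by omega)) (by omega)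
    refine Nat.le_of_mul_le_mul_right ?_ hpos
    calc (k + 1) ^ 2 * (k + 1).choose ℓ * ((k + 1 - ℓ) * (k + 1 - 2 * ℓ) * (k + 1))
        = (k + 1) ^ 2 * (k + 1 - 2 * ℓ) * (k.choose ℓ * (k + 1)) * (k + 1) := by
          rw [hℓk]; ring
      _ ≤ k ^ 2 * (k + 1 - ℓ) * (k.choose ℓ * (k + 1)) * (k + 1) := by gcongr
      _ = k ^ 2 * k.choose ℓ * ((k + 1) * (k + 1) * (k + 1 - ℓ)) := by ring
      _ ≤ ℓ ^ 2 * 4 ^ ℓ * k.choose (2 * ℓ) * ((k + 1) * (k + 1) * (k + 1 - ℓ)) := by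
          gcongr
      _ = ℓ ^ 2 * 4 ^ ℓ * (k.choose (2 * ℓ) * (k + 1)) * (k + 1) * (k + 1 - ℓ) := by ring
      _ = ℓ ^ 2 * 4 ^ ℓ * (k + 1).choose (2 * ℓ)
            * ((k + 1 - ℓ) * (k + 1 - 2 * ℓ) * (k + 1)) := by
          rw [h2ℓk]; ring

theorem sub_mul_sq_mul_choose_le {k ℓ t : ℕ} (hℓ : 2 ≤ ℓ) (hk : 2 * ℓ < k) (ht : t ≤ ℓ) :
    (ℓ + 1 - t) * k ^ 2 * k.choose t ≤ ℓ ^ 2 * 4 ^ ℓ * k.choose (ℓ + t) := by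
  induction ht using Nat.decreasingInduction with
  | self => simpa [two_mul] using sq_mul_choose_le_mul_choose_two_mul hℓ hk
  | of_succ t ht ih =>
    have hct := choose_succ_right_eq k t
    have hcℓt := choose_succ_right_eq k (ℓ + t)
    have hcoeff : (ℓ + 1 - t) * (t + 1) ≤ (ℓ - t) * (ℓ + t + 1) := by
      obtain ⟨a, rfl⟩ := Nat.exists_eq_add_of_lt ht
      rw [show t + a + 1 + 1 - t = a + 2 by omega, show t + a + 1 - t = a + 1 by omega]
      nlinarith
    have hpos : 0 < (t + 1) * (k - (ℓ + t)) := Nat.mul_pos (by omega) (by omega)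
    refine Nat.le_of_mul_le_mul_right ?_ hpos
    calc (ℓ + 1 - t) * k ^ 2 * k.choose t * ((t + 1) * (k - (ℓ + t)))
        ≤ (ℓ + 1 - t) * k ^ 2 * k.choose t * ((t + 1) * (k - t)) := by gcongr; omega
      _ = (ℓ + 1 - t) * (t + 1) * k ^ 2 * (k.choose (t + 1) * (t + 1)) := by rw [hct]; ring
      _ ≤ (ℓ - t) * (ℓ + t + 1) * k ^ 2 * (k.choose (t + 1) * (t + 1)) := by gcongr
      _ = (ℓ + 1 - (t + 1)) * k ^ 2 * k.choose (t + 1)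
            * ((ℓ + t + 1) * (t + 1)) := by
          rw [show ℓ + 1 - (t + 1) = ℓ - t by omega]; ring
      _ ≤ ℓ ^ 2 * 4 ^ ℓ * k.choose (ℓ + (t + 1)) * ((ℓ + t + 1) * (t + 1)) := by
          gcongr
      _ = ℓ ^ 2 * 4 ^ ℓ * (k.choose (ℓ + t + 1) * (ℓ + t + 1)) * (t + 1) := by
          rw [← add_assoc]; ring
      _ = ℓ ^ 2 * 4 ^ ℓ * k.choose (ℓ + t) * ((t + 1) * (k - (ℓ + t))) := by rw [hcℓt]; ring

theorem sub_mul_choose_le_choose_mul_choose {ℓ d t : ℕ} (ht : t ≤ ℓ) (hd : 1 ≤ d) :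
    (ℓ + 1 - t) * (ℓ + d).choose t ≤ (ℓ + d).choose ℓ * (ℓ + d).choose (d + t) := by
  obtain ⟨a, rfl⟩ := Nat.exists_eq_add_of_le ht
  have hmul : (t + a + d).choose (t + d) * (t + d).choose t
      = (t + a + d).choose t * (a + d).choose d := by
    rw [choose_mul (by omega), show t + a + d - t = a + d by omega, add_tsub_cancel_left]
  have ha : a + 1 ≤ (a + d).choose d := by
    calc a + 1 = (a + 1).choose a := by simp
      _ ≤ (a + d).choose a := choose_le_choose a (by omega)
      _ = (a + d).choose d := choose_symm_add
  have htd : (t + d).choose t ≤ (t + a + d).choose (t + a) := by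
    rw [choose_symm_add, choose_symm_add]
    exact choose_le_choose d (by omega)
  calc (t + a + 1 - t) * (t + a + d).choose t
      = (t + a + d).choose t * (a + 1) := by rw [show t + a + 1 - t = a + 1 by omega, mul_comm]
    _ ≤ (t + a + d).choose t * (a + d).choose d := by gcongr
    _ = (t + a + d).choose (t + d) * (t + d).choose t := hmul.symm
    _ ≤ (t + a + d).choose (t + d) * (t + a + d).choose (t + a) := by gcongr
    _ = (t + a + d).choose (t + a) * (t + a + d).choose (d + t) := by rw [mul_comm, add_comm d]

theorem choose_mul_pow_self_le {ℓ d : ℕ} (hℓ : 2 ≤ ℓ) (hd : 1 ≤ d) (hdℓ : d ≤ ℓ)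
    (h22 : ¬(ℓ = 2 ∧ d = 2)) : (ℓ + d).choose d * d ^ d ≤ ℓ ^ (2 * d) := by
  rcases hd.eq_or_lt with rfl | hd
  · rw [choose_one_right, one_pow, mul_one, mul_one]; nlinarith
  by_cases h33 : ℓ = 3 ∧ d = 3
  · obtain ⟨rfl, rfl⟩ := h33; decide
  have hchoose : (ℓ + d).choose d * d ! ≤ (2 * ℓ) ^ d := by
    rw [mul_comm, ← descFactorial_eq_factorial_mul_choose]
    exact (descFactorial_le_pow _ _).trans (Nat.pow_le_pow_left (by omega) d)
  have hfact : 2 ^ d * d ^ d ≤ ℓ ^ d * d ! := by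
    rcases Nat.lt_or_ge d 4 with h4 | h4
    · interval_cases d
      · have : 3 ^ 2 ≤ ℓ ^ 2 := Nat.pow_le_pow_left (by omega) 2
        rw [factorial_two]; omega
      · have : 4 ^ 3 ≤ ℓ ^ 3 := Nat.pow_le_pow_left (by omega) 3
        rw [show 3 ! = 6 from rfl]; omega
    · rw [mul_comm (ℓ ^ d)]
      exact Nat.mul_le_mul (two_pow_le_factorial h4) (Nat.pow_le_pow_left hdℓ d)
  refine Nat.le_of_mul_le_mul_right (c := 2 ^ d * d !) ?_ (by positivity)
  calc (ℓ + d).choose d * d ^ d * (2 ^ d * d !)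
      = (ℓ + d).choose d * d ! * (2 ^ d * d ^ d) := by ring
    _ ≤ (2 * ℓ) ^ d * (ℓ ^ d * d !) := Nat.mul_le_mul hchoose hfact
    _ = ℓ ^ (2 * d) * (2 ^ d * d !) := by ring

theorem sub_mul_choose_mul_pow_le {ℓ d t : ℕ} (hℓ : 2 ≤ ℓ) (hd : 1 ≤ d) (hdℓ : d ≤ ℓ)
    (h22 : ¬(ℓ = 2 ∧ d = 2)) (ht : t ≤ ℓ) :
    (ℓ + 1 - t) * (ℓ + d).choose t * d ^ d ≤ ℓ ^ (2 * d) * (ℓ + d).choose (d + t) :=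
  calc (ℓ + 1 - t) * (ℓ + d).choose t * d ^ d
      ≤ (ℓ + d).choose ℓ * (ℓ + d).choose (d + t) * d ^ d :=
        Nat.mul_le_mul_right _ (sub_mul_choose_le_choose_mul_choose ht hd)
    _ = (ℓ + d).choose d * d ^ d * (ℓ + d).choose (d + t) := by
        rw [choose_symm_add]; ring
    _ ≤ ℓ ^ (2 * d) * (ℓ + d).choose (d + t) :=
        Nat.mul_le_mul_right _ (choose_mul_pow_self_le hℓ hd hdℓ h22)

end Nat

section

variable {k ℓ : ℕ} {p : ℝ}

theorem sum_choose_mul_pow_shift_le {n s : ℕ} (hs : 1 ≤ s) (hn : s + n ≤ k + 1)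
    (hp0 : 0 ≤ p) (hp1 : p ≤ 1) :
    ∑ t ∈ range n, (k.choose (s + t) : ℝ) * p ^ (s + t) * (1 - p) ^ (k - (s + t))
      ≤ 1 - (1 - p) ^ k := by
  set b : ℕ → ℝ := fun m ↦ k.choose m * p ^ m * (1 - p) ^ (k - m)
  have hb : ∑ m ∈ range (k + 1), b m = 1 := by
    calc ∑ m ∈ range (k + 1), b m = (p + (1 - p)) ^ k := by
          rw [add_pow]
          exact sum_congr rfl fun m _ ↦ by simp only [b]; ring
      _ = 1 := by simp
  have hsplit : ∑ m ∈ range (k + 1), b m = b 0 + ∑ m ∈ Ico 1 (k + 1), b m := by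
    rw [range_eq_Ico, sum_eq_sum_Ico_succ_bot k.succ_pos]
  calc ∑ t ∈ range n, b (s + t) = ∑ m ∈ Ico s (s + n), b m := by
        rw [sum_Ico_eq_sum_range, add_tsub_cancel_left]
    _ ≤ ∑ m ∈ Ico 1 (k + 1), b m :=
        sum_le_sum_of_subset_of_nonneg (Ico_subset_Ico hs hn) fun m _ _ ↦ by positivity
    _ = 1 - (1 - p) ^ k := by
        have h0 : b 0 = (1 - p) ^ k := by simp [b]
        linarith

theorem nat_mul_one_sub_mul_pow_le (n : ℕ) (hp0 : 0 ≤ p) (hp1 : p ≤ 1) :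
    n * (1 - p) * p ^ n ≤ p * (1 - p ^ n) := by
  induction n with
  | zero => simp
  | succ n ih =>
    have hpn : p ^ n ≤ 1 := pow_le_one₀ hp0 hp1
    push_cast
    rw [pow_succ]
    nlinarith [mul_le_mul_of_nonneg_left ih hp0,
      mul_nonneg (mul_nonneg hp0 (sub_nonneg.2 hp1)) (sub_nonneg.2 hpn)]

/-- For each `t ≤ ℓ`,
`k p^ℓ · (ℓ + 1 - t) C(k,t) p^t (1-p)^(k-t) ≤ ℓ · C(k,s+t) p^(s+t) (1-p)^(k-s-t)`,
stated after cancelling the common factor `p^t (1-p)^(k-s-t)`. -/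
def ShiftBound (k ℓ s : ℕ) (p : ℝ) : Prop :=
  ∀ t ≤ ℓ,
    ((ℓ : ℝ) + 1 - t) * k * k.choose t * p ^ ℓ * (1 - p) ^ s ≤ ℓ * k.choose (s + t) * p ^ s

theorem mul_pow_mul_sum_lt_of_shiftBound {s : ℕ} (hℓ : 1 ≤ ℓ) (hs : 1 ≤ s) (hk : ℓ + s ≤ k)
    (hp0 : 0 ≤ p) (hp1 : p < 1) (h : ShiftBound k ℓ s p) :
    k * p ^ ℓ * ∑ t ∈ range (ℓ + 1), ((ℓ : ℝ) + 1 - t) * k.choose t * p ^ t * (1 - p) ^ (k - t)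
      < ℓ := by
  have hq : 0 < 1 - p := sub_pos.2 hp1
  calc _ = ∑ t ∈ range (ℓ + 1), ((ℓ : ℝ) + 1 - t) * k * k.choose t * p ^ ℓ * (1 - p) ^ s
          * (p ^ t * (1 - p) ^ (k - (s + t))) := by
        rw [mul_sum]
        refine sum_congr rfl fun t ht ↦ ?_
        rw [mem_range] at ht
        rw [show k - t = s + (k - (s + t)) by omega, pow_add]
        ring
    _ ≤ ∑ t ∈ range (ℓ + 1),
          ℓ * k.choose (s + t) * p ^ s * (p ^ t * (1 - p) ^ (k - (s + t))) := by
        refine sum_le_sum fun t ht ↦ mul_le_mul_of_nonneg_right ?_ (by positivity)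
        exact h t (Nat.lt_succ_iff.1 (mem_range.1 ht))
    _ = ℓ * ∑ t ∈ range (ℓ + 1),
          (k.choose (s + t) : ℝ) * p ^ (s + t) * (1 - p) ^ (k - (s + t)) := by
        rw [mul_sum]
        exact sum_congr rfl fun t _ ↦ by ring
    _ ≤ ℓ * (1 - (1 - p) ^ k) := by
        gcongr
        exact sum_choose_mul_pow_shift_le hs (by omega) hp0 hp1.le
    _ < ℓ := by
        have : (0 : ℝ) < ℓ := by exact_mod_cast hℓ
        nlinarith [pow_pos hq k]

theorem shiftBound_self (hℓ : 2 ≤ ℓ) (hk : 2 * ℓ < k) (hp0 : 0 ≤ p) (hp1 : p ≤ 1)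
    (hpl : (ℓ : ℝ) ≤ k * p ^ ℓ) : ShiftBound k ℓ ℓ p := by
  intro t ht
  have hcomb := Nat.sub_mul_sq_mul_choose_le hℓ hk ht
  rw [← Nat.cast_le (α := ℝ)] at hcomb
  push_cast [Nat.cast_sub (show t ≤ ℓ + 1 by omega)] at hcomb
  have ht' : (t : ℝ) ≤ ℓ := by exact_mod_cast ht
  have hamgm : (4 * (p * (1 - p))) ^ ℓ ≤ 1 :=
    pow_le_one₀ (by nlinarith) (by nlinarith [sq_nonneg (2 * p - 1)])
  have hk0 : (0 : ℝ) < k * 4 ^ ℓ := by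
    have : (0 : ℝ) < k := by exact_mod_cast (by omega : 0 < k)
    positivity
  refine le_of_mul_le_mul_right ?_ hk0
  calc ((ℓ : ℝ) + 1 - t) * k * k.choose t * p ^ ℓ * (1 - p) ^ ℓ * (k * 4 ^ ℓ)
      = ((ℓ : ℝ) + 1 - t) * k ^ 2 * k.choose t * (4 * (p * (1 - p))) ^ ℓ := by
        rw [mul_pow, mul_pow]; ring
    _ ≤ ((ℓ : ℝ) + 1 - t) * k ^ 2 * k.choose t :=
        mul_le_of_le_one_right
          (mul_nonneg (mul_nonneg (by linarith) (by positivity)) (by positivity)) hamgm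
    _ ≤ ℓ * ℓ * 4 ^ ℓ * k.choose (ℓ + t) := by linarith
    _ ≤ ℓ * (k * p ^ ℓ) * 4 ^ ℓ * k.choose (ℓ + t) := by gcongr
    _ = ℓ * k.choose (ℓ + t) * p ^ ℓ * (k * 4 ^ ℓ) := by ring

theorem add_mul_pow_mul_one_sub_pow_le {d : ℕ} (hℓ : 1 ≤ ℓ) (hd : 1 ≤ d) (hp0 : 0 ≤ p)
    (hp1 : p ≤ 1) (hpl : (ℓ : ℝ) ≤ (ℓ + d) * p ^ ℓ) :
    ((ℓ : ℝ) + d) * p ^ ℓ * (1 - p) ^ d * ℓ ^ (2 * d) ≤ ℓ * d ^ d * p ^ d := by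
  have hℓ0 : (0 : ℝ) < ℓ := by exact_mod_cast hℓ
  set K := ((ℓ : ℝ) + d) * p ^ ℓ
  set q := 1 - p
  have hy : K * q * ℓ ≤ d * p := by
    have := mul_le_mul_of_nonneg_left (nat_mul_one_sub_mul_pow_le ℓ hp0 hp1)
      (by positivity : (0 : ℝ) ≤ ℓ + d)
    nlinarith
  have hyd := pow_le_pow_left₀ (by positivity) hy d
  clear_value K q
  obtain ⟨e, rfl⟩ : ∃ e, d = e + 1 := ⟨d - 1, by omega⟩
  have hK : (ℓ : ℝ) ^ e ≤ K ^ e := pow_le_pow_left₀ hℓ0.le hpl e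
  refine le_of_mul_le_mul_right ?_ (pow_pos (hℓ0.trans_le hpl) e)
  calc K * q ^ (e + 1) * ℓ ^ (2 * (e + 1)) * K ^ e
      = ℓ * ((K * q * ℓ) ^ (e + 1) * ℓ ^ e) := by ring
    _ ≤ ℓ * ((((e + 1 : ℕ) : ℝ) * p) ^ (e + 1) * K ^ e) := by gcongr
    _ = ℓ * ((e + 1 : ℕ) : ℝ) ^ (e + 1) * p ^ (e + 1) * K ^ e := by ring

theorem shiftBound_add {d : ℕ} (hℓ : 2 ≤ ℓ) (hd : 1 ≤ d) (hdℓ : d ≤ ℓ)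
    (h22 : ¬(ℓ = 2 ∧ d = 2)) (hp0 : 0 ≤ p) (hp1 : p ≤ 1) (hpl : (ℓ : ℝ) ≤ (ℓ + d : ℕ) * p ^ ℓ) :
    ShiftBound (ℓ + d) ℓ d p := by
  intro t ht
  have hcomb := Nat.sub_mul_choose_mul_pow_le hℓ hd hdℓ h22 ht
  rw [← Nat.cast_le (α := ℝ)] at hcomb
  push_cast [Nat.cast_sub (show t ≤ ℓ + 1 by omega)] at hcomb
  push_cast at hpl ⊢
  have ht' : (t : ℝ) ≤ ℓ := by exact_mod_cast ht
  have hreal := add_mul_pow_mul_one_sub_pow_le (by omega) hd hp0 hp1 hpl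
  have hℓd : (0 : ℝ) < ℓ ^ (2 * d) := by
    have : (0 : ℝ) < ℓ := by exact_mod_cast (by omega : 0 < ℓ)
    positivity
  refine le_of_mul_le_mul_right ?_ hℓd
  calc _ = ((ℓ : ℝ) + 1 - t) * (ℓ + d : ℕ).choose t
          * (((ℓ : ℝ) + d) * p ^ ℓ * (1 - p) ^ d * ℓ ^ (2 * d)) := by ring
    _ ≤ ((ℓ : ℝ) + 1 - t) * (ℓ + d : ℕ).choose t * (ℓ * d ^ d * p ^ d) := by
        gcongr
        exact mul_nonneg (by linarith) (Nat.cast_nonneg _)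
    _ = ℓ * p ^ d * (((ℓ : ℝ) + 1 - t) * (ℓ + d : ℕ).choose t * d ^ d) := by ring
    _ ≤ ℓ * p ^ d * (ℓ ^ (2 * d) * (ℓ + d : ℕ).choose (d + t)) := by gcongr
    _ = ℓ * (ℓ + d : ℕ).choose (d + t) * p ^ d * ℓ ^ (2 * d) := by ring

theorem shiftBound_four_two_one (hp0 : 0 ≤ p) : ShiftBound 4 2 1 p := by
  intro t ht
  have hpq : p * (1 - p) ≤ 1 / 4 := by nlinarith [sq_nonneg (2 * p - 1)]
  interval_cases t <;> norm_num [Nat.choose] <;> nlinarith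

theorem mul_pow_div_mul_sum_lt_one (hℓ : 2 ≤ ℓ) (hℓk : ℓ < k) (hp0 : 0 ≤ p) (hp1 : p ≤ 1)
    (hpl : (ℓ : ℝ) ≤ k * p ^ ℓ) :
    k * p ^ ℓ / ℓ * ∑ t ∈ range (ℓ + 1), ((ℓ : ℝ) + 1 - t) * k.choose t * p ^ t * (1 - p) ^ (k - t)
      < 1 := by
  rw [div_mul_eq_mul_div, div_lt_one (by exact_mod_cast (by omega : 0 < ℓ))]
  obtain rfl | hp1 := hp1.eq_or_lt
  · rw [sum_eq_zero fun t ht ↦ by simp [zero_pow (by simp at ht; omega : k - t ≠ 0)]]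
    rw [mul_zero]
    exact_mod_cast (by omega : 0 < ℓ)
  by_cases hk : 2 * ℓ < k
  · exact mul_pow_mul_sum_lt_of_shiftBound (by omega) (by omega) (by omega) hp0 hp1
      (shiftBound_self hℓ hk hp0 hp1.le hpl)
  obtain ⟨d, rfl⟩ : ∃ d, k = ℓ + d := ⟨k - ℓ, by omega⟩
  by_cases h22 : ℓ = 2 ∧ d = 2
  · obtain ⟨rfl, rfl⟩ := h22
    exact mul_pow_mul_sum_lt_of_shiftBound (by omega) le_rfl (by omega) hp0 hp1
      (shiftBound_four_two_one hp0)
  · exact mul_pow_mul_sum_lt_of_shiftBound (by omega) (by omega) le_rfl hp0 hp1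
      (shiftBound_add hℓ (by omega) (by omega) h22 hp0 hp1.le hpl)

end

theorem Ufun_add_one_self (k ℓ : ℕ) (p : ℝ) :
    Ufun k ℓ p (ℓ + 1) = ℓ + 1 - k * p ^ ℓ / ℓ *
      ∑ t ∈ range (ℓ + 1), ((ℓ : ℝ) + 1 - t) * k.choose t * p ^ t * (1 - p) ^ (k - t) := by
  rw [Ufun, sum_range_succ, sub_self, zero_mul, zero_mul, zero_mul, add_zero, mul_sum, mul_sum]
  push_cast
  congr 1
  refine sum_congr rfl fun t _ ↦ ?_
  rw [pow_add]
  ring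

theorem U_ell_plus_one_gt_ell (k ℓ : ℕ) (hℓ : 2 ≤ ℓ) (hℓk : ℓ < k)
    (p : ℝ) (hp1 : ((ℓ:ℝ) / (k:ℝ)) ^ (1 / (ℓ:ℝ)) ≤ p) (hp2 : p ≤ 1) :
    ((k:ℝ) * p ^ ℓ / (ℓ:ℝ)) * ∑ t ∈ Finset.range (ℓ + 1),
        ((ℓ:ℝ) + 1 - (t:ℝ)) * (Nat.choose k t : ℝ) * p ^ t * (1 - p) ^ (k - t) < 1 ∧
    (ℓ:ℝ) < Ufun k ℓ p (ℓ + 1) := by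
  have hk : (0 : ℝ) < k := by exact_mod_cast (by omega : 0 < k)
  have hbase : 0 ≤ (ℓ : ℝ) / k := by positivity
  have hp0 : 0 ≤ p := (Real.rpow_nonneg hbase _).trans hp1
  have hpl : (ℓ : ℝ) ≤ k * p ^ ℓ := by
    have := pow_le_pow_left₀ (Real.rpow_nonneg hbase _) hp1 ℓ
    rwa [one_div, Real.rpow_inv_natCast_pow hbase (by omega), div_le_iff₀ hk, mul_comm] at this
  have hlt := mul_pow_div_mul_sum_lt_one hℓ hℓk hp0 hp2 hpl
  exact ⟨hlt, by rw [Ufun_add_one_self]; linarith⟩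
end

section
/- For all integers ℓ and k with 2 ≤ ℓ < k, the inequality C(k,ℓ)·(1 − (ℓ/k)^{1/ℓ})^{k−ℓ} < 1 holds. -/
/-!
Write `d = k - ℓ`. For `ℓ ≥ 3` we may replace `(ℓ/k)^(1/ℓ)` by the smaller `a = (ℓ/k)^(1/3)`.
Then `1 - a = (d/k) / (1 + a + a²)`, and the entropy bound `C(k,ℓ) d^d ℓ^ℓ ≤ k^k` (a single
term of the binomial expansion of `(d + ℓ)^k`) gives `C(k,ℓ) (d/k)^d ≤ a^(-3ℓ)`. Finally
`a^(-3ℓ) < (1 + a + a²)^d` follows from `log (1 + a + a²) ≥ a` and `log a⁻¹ ≤ a⁻¹ - 1`, with slack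
`(1 - a)³ / a²`.

For `ℓ = 2` the entropy bound is too weak. With `r = √(2/k)` and `n = k - 2` we have
`(1 - r)(1 + r)(1 + 2/n) = 1`, so it suffices that `C(k,2) < (1 + r)^n (1 + 2/n)^n`. Bounding both
powers below by a few binomial terms (only even powers of `r`, so that `r² = 2/k` makes everything
rational in `k`) reduces this to a polynomial inequality for `k ≥ 5`; `k = 3, 4` are direct.
-/

open Real Finset

theorem choose_mul_pow_mul_pow_le_pow (d l : ℕ) :
    (d + l).choose l * d ^ d * l ^ l ≤ (d + l) ^ (d + l) := by
  calc (d + l).choose l * d ^ d * l ^ l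
      = d ^ d * l ^ (d + l - d) * (d + l).choose d := by
        rw [Nat.add_sub_cancel_left, Nat.choose_symm_add]; ring
    _ ≤ ∑ j ∈ range (d + l + 1), d ^ j * l ^ (d + l - j) * (d + l).choose j :=
        single_le_sum (f := fun j ↦ d ^ j * l ^ (d + l - j) * (d + l).choose j)
          (fun _ _ ↦ Nat.zero_le _) (by simp)
    _ = (d + l) ^ (d + l) := (add_pow d l (d + l)).symm

theorem sum_choose_mul_pow_le_one_add_pow {s : ℝ} (hs : 0 ≤ s) (n : ℕ) (S : Finset ℕ) :
    ∑ j ∈ S, (n.choose j : ℝ) * s ^ j ≤ (1 + s) ^ n := by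
  calc ∑ j ∈ S, (n.choose j : ℝ) * s ^ j
      ≤ ∑ j ∈ S ∪ range (n + 1), (n.choose j : ℝ) * s ^ j :=
        sum_le_sum_of_subset_of_nonneg subset_union_left (fun _ _ _ ↦ by positivity)
    _ = ∑ j ∈ range (n + 1), (n.choose j : ℝ) * s ^ j := by
        refine (sum_subset subset_union_right fun j _ hj ↦ ?_).symm
        rw [Nat.choose_eq_zero_of_lt (by simpa using hj), Nat.cast_zero, zero_mul]
    _ = (1 + s) ^ n := by
        rw [add_comm 1 s, add_pow]
        simp only [one_pow, mul_one, mul_comm]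

theorem Nat.cast_choose_three (n : ℕ) : (n.choose 3 : ℝ) = n * (n - 1) * (n - 2) / 6 := by
  simp [Nat.cast_choose_eq_descPochhammer_div, descPochhammer_succ_eval, Nat.factorial]

theorem Nat.cast_choose_four (n : ℕ) :
    (n.choose 4 : ℝ) = n * (n - 1) * (n - 2) * (n - 3) / 24 := by
  simp [Nat.cast_choose_eq_descPochhammer_div, descPochhammer_succ_eval, Nat.factorial]

theorem three_mul_log_inv_lt {a : ℝ} (ha0 : 0 < a) (ha1 : a < 1) :
    3 * log a⁻¹ < (a⁻¹ ^ 3 - 1) * log (1 + a + a ^ 2) := by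
  have hexp : exp a ≤ 1 + a + a ^ 2 := by
    have := abs_exp_sub_one_sub_id_le (x := a) (by rw [abs_of_pos ha0]; exact ha1.le)
    linarith [le_abs_self (exp a - 1 - a)]
  have hlog_sq : a ≤ log (1 + a + a ^ 2) := by
    rw [le_log_iff_exp_le (by positivity)]; exact hexp
  have hlog_inv : log a⁻¹ ≤ a⁻¹ - 1 := log_le_sub_one_of_pos (by positivity)
  have hgap : (a⁻¹ ^ 3 - 1) * a - 3 * (a⁻¹ - 1) = (1 - a) ^ 3 / a ^ 2 := by
    field_simp; ring
  have hgap_pos : 0 < (1 - a) ^ 3 / a ^ 2 := by have := sub_pos.2 ha1; positivity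
  have hpos : 0 ≤ a⁻¹ ^ 3 - 1 := by
    rw [sub_nonneg]; exact one_le_pow₀ (one_le_inv₀ ha0 |>.2 ha1.le)
  calc 3 * log a⁻¹ ≤ 3 * (a⁻¹ - 1) := by linarith
    _ < (a⁻¹ ^ 3 - 1) * a := by linarith
    _ ≤ (a⁻¹ ^ 3 - 1) * log (1 + a + a ^ 2) := mul_le_mul_of_nonneg_left hlog_sq hpos

theorem choose_mul_one_sub_cbrt_pow_lt_one {k l : ℕ} (hl : 0 < l) (hlk : l < k) :
    (k.choose l : ℝ) * (1 - ((l : ℝ) / k) ^ (1 / 3 : ℝ)) ^ (k - l) < 1 := by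
  set d := k - l
  have hdlk : d + l = k := Nat.sub_add_cancel hlk.le
  have hl0 : (0 : ℝ) < l := by exact_mod_cast hl
  have hk0 : (0 : ℝ) < k := by exact_mod_cast hl.trans hlk
  have hdk : (d : ℝ) = k - l := by rw [← hdlk]; push_cast; ring
  set a := ((l : ℝ) / k) ^ (1 / 3 : ℝ)
  have ha0 : 0 < a := by positivity
  have ha3 : a ^ 3 = l / k := by
    rw [← rpow_natCast, ← rpow_mul (by positivity)]; norm_num
  have ha1 : a < 1 := by
    refine (pow_lt_one_iff_of_nonneg ha0.le three_ne_zero).1 ?_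
    rw [ha3, div_lt_one hk0]; exact_mod_cast hlk
  have hinv : a⁻¹ ^ 3 = k / l := by rw [inv_pow, ha3, inv_div]
  have hfactor : (1 - a) * (1 + a + a ^ 2) = d / k := by
    rw [hdk, sub_div, div_self hk0.ne', ← ha3]; ring
  have hentropy : (k.choose l : ℝ) * (d / k) ^ d ≤ (a⁻¹ ^ 3) ^ l := by
    have h : (k.choose l : ℝ) * d ^ d * l ^ l ≤ k ^ k := by
      exact_mod_cast hdlk ▸ choose_mul_pow_mul_pow_le_pow d l
    have hkk : (k : ℝ) ^ k = k ^ l * k ^ d := by rw [← pow_add, add_comm, hdlk]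
    rw [hinv, div_pow, div_pow, mul_div_assoc', div_le_div_iff₀ (by positivity) (by positivity)]
    linarith
  have hgrowth : (a⁻¹ ^ 3) ^ l < (1 + a + a ^ 2) ^ d := by
    rw [← log_lt_log_iff (by positivity) (by positivity), log_pow, log_pow, log_pow]
    have hd : (d : ℝ) = l * (a⁻¹ ^ 3 - 1) := by rw [hinv, hdk]; field_simp
    rw [hd, mul_assoc]
    exact mul_lt_mul_of_pos_left (three_mul_log_inv_lt ha0 ha1) hl0
  calc (k.choose l : ℝ) * (1 - a) ^ d
      = (k.choose l : ℝ) * (d / k) ^ d / (1 + a + a ^ 2) ^ d := by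
        rw [← hfactor, mul_pow, mul_div_assoc, mul_div_cancel_right₀ _ (by positivity)]
    _ < 1 := by rw [div_lt_one (by positivity)]; linarith

/-- The two factors are the lower bounds for `(1 + √(2 / x)) ^ (x - 2)` and
`(1 + 2 / (x - 2)) ^ (x - 2)` given by the binomial terms of degrees `0, 2, 4` and `0, 1, 2, 3`. -/
theorem lt_quartic_mul_cubic {x : ℝ} (hx : 5 ≤ x) :
    x * (x - 1) / 2 <
      (1 + (x - 2) * (x - 3) / x + (x - 2) * (x - 3) * (x - 4) * (x - 5) / (6 * x ^ 2)) *
        (3 + 2 * (x - 3) / (x - 2) + 4 * (x - 3) * (x - 4) / (3 * (x - 2) ^ 2)) := by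
  have hx0 : 0 < x := by linarith
  have hx2 : 0 < x - 2 := by linarith
  have hm : 0 ≤ x - 5 := by linarith
  rw [← sub_pos]
  have key : (1 + (x - 2) * (x - 3) / x + (x - 2) * (x - 3) * (x - 4) * (x - 5) / (6 * x ^ 2)) *
        (3 + 2 * (x - 3) / (x - 2) + 4 * (x - 3) * (x - 4) / (3 * (x - 2) ^ 2)) - x * (x - 1) / 2
      = (10 * (x - 5) ^ 7 + 129 * (x - 5) ^ 6 + 715 * (x - 5) ^ 5 + 2280 * (x - 5) ^ 4
          + 4780 * (x - 5) ^ 3 + 6861 * (x - 5) ^ 2 + 6015 * (x - 5) + 2250)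
        / (18 * x ^ 2 * (x - 2) ^ 3) := by
    field_simp
    ring
  rw [key]
  positivity

theorem choose_two_lt_one_add_sqrt_pow_mul {k : ℕ} (hk : 2 < k) :
    (k.choose 2 : ℝ) < ((1 + √(2 / k)) * (1 + 2 / (k - 2 : ℕ))) ^ (k - 2) := by
  set r := √(2 / k)
  have hr0 : 0 < r := sqrt_pos.2 (by positivity)
  have hr2 : r ^ 2 = 2 / k := sq_sqrt (by positivity)
  rcases (by omega : k = 3 ∨ k = 4 ∨ 5 ≤ k) with rfl | rfl | hk5
  · norm_num; linarith
  · norm_num [Nat.choose]; nlinarith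
  set n := k - 2
  have hK : (5 : ℝ) ≤ k := by exact_mod_cast hk5
  have hn : (n : ℝ) = k - 2 := by rw [Nat.cast_sub hk.le]; norm_num
  have hK2 : (k : ℝ) - 2 ≠ 0 := by linarith
  calc (k.choose 2 : ℝ)
      = k * (k - 1) / 2 := Nat.cast_choose_two ℝ k
    _ < (1 + (k - 2) * (k - 3) / k + (k - 2) * (k - 3) * (k - 4) * (k - 5) / (6 * k ^ 2)) *
        (3 + 2 * (k - 3) / (k - 2) + 4 * (k - 3) * (k - 4) / (3 * (k - 2) ^ 2)) :=
        lt_quartic_mul_cubic hK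
    _ = (∑ j ∈ {0, 2, 4}, (n.choose j : ℝ) * r ^ j) *
        ∑ j ∈ range 4, (n.choose j : ℝ) * (2 / n) ^ j := by
        simp only [mem_insert, OfNat.zero_ne_ofNat, mem_singleton, or_self, not_false_eq_true,
          sum_insert, Nat.choose_zero_right, Nat.cast_one, pow_zero, mul_one, Nat.reduceEqDiff,
          Nat.cast_choose_two, sum_singleton, Nat.cast_choose_four, sum_range_succ, range_one,
          Nat.choose_one_right, pow_one, Nat.cast_choose_three]
        rw [show r ^ 4 = (r ^ 2) ^ 2 by ring, hr2, hn]
        field_simp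
        ring
    _ ≤ (1 + r) ^ n * (1 + 2 / n) ^ n :=
        mul_le_mul (sum_choose_mul_pow_le_one_add_pow hr0.le n _)
          (sum_choose_mul_pow_le_one_add_pow (by positivity) n _) (by positivity) (by positivity)
    _ = ((1 + r) * (1 + 2 / n)) ^ n := (mul_pow _ _ _).symm

theorem choose_two_mul_one_sub_sqrt_pow_lt_one {k : ℕ} (hk : 2 < k) :
    (k.choose 2 : ℝ) * (1 - √(2 / k)) ^ (k - 2) < 1 := by
  have hn : ((k - 2 : ℕ) : ℝ) = k - 2 := by rw [Nat.cast_sub hk.le]; norm_num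
  have hK2 : (k : ℝ) - 2 ≠ 0 := by
    have : (2 : ℝ) < k := by exact_mod_cast hk
    linarith
  have hr2 : √(2 / k) ^ 2 = 2 / k := sq_sqrt (by positivity)
  have hinv : (1 - √(2 / k)) * ((1 + √(2 / k)) * (1 + 2 / (k - 2 : ℕ))) = 1 := by
    rw [← mul_assoc, show (1 - √(2 / k)) * (1 + √(2 / k)) = 1 - √(2 / k) ^ 2 by ring, hr2, hn]
    field_simp
    ring
  calc (k.choose 2 : ℝ) * (1 - √(2 / k)) ^ (k - 2)
      = k.choose 2 / ((1 + √(2 / k)) * (1 + 2 / (k - 2 : ℕ))) ^ (k - 2) := by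
        rw [eq_div_iff (by positivity), mul_assoc, ← mul_pow, hinv, one_pow, mul_one]
    _ < 1 := (div_lt_one (by positivity)).2 (choose_two_lt_one_add_sqrt_pow_mul hk)

theorem choose_mul_pow_lt_one (k ℓ : ℕ) (hℓ : 2 ≤ ℓ) (hℓk : ℓ < k) :
    (Nat.choose k ℓ : ℝ) * (1 - ((ℓ:ℝ) / (k:ℝ)) ^ (1 / (ℓ:ℝ))) ^ (k - ℓ) < 1 := by
  rcases hℓ.eq_or_lt with rfl | hℓ3
  · rw [Nat.cast_ofNat, ← sqrt_eq_rpow]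
    exact choose_two_mul_one_sub_sqrt_pow_lt_one hℓk
  · have hc : (0 : ℝ) < ℓ / k :=
      div_pos (by exact_mod_cast hℓ3.pos) (by exact_mod_cast hℓ3.pos.trans hℓk)
    have hc1 : (ℓ : ℝ) / k ≤ 1 := div_le_one_of_le₀ (by exact_mod_cast hℓk.le) (by positivity)
    calc (Nat.choose k ℓ : ℝ) * (1 - ((ℓ:ℝ) / (k:ℝ)) ^ (1 / (ℓ:ℝ))) ^ (k - ℓ)
        ≤ (k.choose ℓ : ℝ) * (1 - ((ℓ : ℝ) / k) ^ (1 / 3 : ℝ)) ^ (k - ℓ) := by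
          have h3 : (3 : ℝ) ≤ ℓ := by exact_mod_cast hℓ3
          gcongr ?_ * (1 - ?_) ^ _
          · exact sub_nonneg.2 (rpow_le_one hc.le hc1 (by positivity))
          · exact rpow_le_rpow_of_exponent_ge hc hc1 (by gcongr)
      _ < 1 := choose_mul_one_sub_cbrt_pow_lt_one (by omega) hℓk
end

section
/- For all integers ℓ and k with 2 ≤ ℓ < k and k ≤ ((√5+1)/2)·ℓ, the inequality C(k,ℓ)·(1 − (ℓ/k)^{1/ℓ})^{k−ℓ} < 1 holds. -/
theorem choose_mul_pow_lt_one_small_k (k ℓ : ℕ) (hℓ : 2 ≤ ℓ) (hℓk : ℓ < k)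
    (hk : (k:ℝ) ≤ ((Real.sqrt 5 + 1) / 2) * (ℓ:ℝ)) :
    (Nat.choose k ℓ : ℝ) * (1 - ((ℓ:ℝ) / (k:ℝ)) ^ (1 / (ℓ:ℝ))) ^ (k - ℓ) < 1 := by
  set r : ℕ := k - ℓ with hrdef
  have hr1 : 1 ≤ r := by omega
  have hrcast : (r:ℝ) = (k:ℝ) - (ℓ:ℝ) := by
    rw [hrdef, Nat.cast_sub hℓk.le]
  have hℓpos : (0:ℝ) < (ℓ:ℝ) := by
    have : 0 < ℓ := by omega
    exact_mod_cast this
  have hℓ2 : (2:ℝ) ≤ (ℓ:ℝ) := by exact_mod_cast hℓ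
  have hkpos : (0:ℝ) < (k:ℝ) := by
    have : 0 < k := by omega
    exact_mod_cast this
  have hx0 : (0:ℝ) < (ℓ:ℝ)/(k:ℝ) := by positivity
  have hx1 : (ℓ:ℝ)/(k:ℝ) < 1 := by
    rw [div_lt_one hkpos]; exact_mod_cast hℓk
  -- 1 - (ℓ/k)^{1/ℓ} ≤ r/ℓ²
  have key : 1 - ((ℓ:ℝ)/(k:ℝ)) ^ (1/(ℓ:ℝ)) ≤ (r:ℝ)/(ℓ:ℝ)^2 := by
    have h1 : Real.log ((ℓ:ℝ)/(k:ℝ)) * (1/(ℓ:ℝ)) + 1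
        ≤ ((ℓ:ℝ)/(k:ℝ)) ^ (1/(ℓ:ℝ)) := by
      rw [Real.rpow_def_of_pos hx0]
      exact Real.add_one_le_exp _
    have h2 : Real.log ((k:ℝ)/(ℓ:ℝ)) ≤ (k:ℝ)/(ℓ:ℝ) - 1 :=
      Real.log_le_sub_one_of_pos (by positivity)
    have h3 : Real.log ((ℓ:ℝ)/(k:ℝ)) = - Real.log ((k:ℝ)/(ℓ:ℝ)) := by
      rw [← Real.log_inv]; congr 1; field_simp
    have hinv : (0:ℝ) < 1/(ℓ:ℝ) := by positivity
    have h4 : Real.log ((k:ℝ)/(ℓ:ℝ)) * (1/(ℓ:ℝ)) ≤ ((k:ℝ)/(ℓ:ℝ) - 1) * (1/(ℓ:ℝ)) :=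
      mul_le_mul_of_nonneg_right h2 hinv.le
    have h5 : ((k:ℝ)/(ℓ:ℝ) - 1) * (1/(ℓ:ℝ)) = (r:ℝ)/(ℓ:ℝ)^2 := by
      rw [hrcast, div_sub_one hℓpos.ne', div_mul_div_comm, mul_one, pow_two]
    rw [h3] at h1
    linarith
  have hpowle : ((ℓ:ℝ)/(k:ℝ)) ^ (1/(ℓ:ℝ)) ≤ 1 :=
    Real.rpow_le_one hx0.le hx1.le (by positivity)
  have hnn : (0:ℝ) ≤ 1 - ((ℓ:ℝ)/(k:ℝ)) ^ (1/(ℓ:ℝ)) := by linarith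
  have hpow : (1 - ((ℓ:ℝ)/(k:ℝ)) ^ (1/(ℓ:ℝ))) ^ r ≤ ((r:ℝ)/(ℓ:ℝ)^2) ^ r :=
    pow_le_pow_left₀ hnn key r
  have hchoose : (Nat.choose k ℓ : ℝ) ≤ (k:ℝ)^r / (Nat.factorial r : ℝ) := by
    have := Nat.choose_symm (le_of_lt hℓk)
    rw [← this]
    exact_mod_cast Nat.choose_le_pow_div r k
  have hfacpos : (0:ℝ) < (Nat.factorial r : ℝ) := by
    exact_mod_cast Nat.factorial_pos r
  have hs : Real.sqrt 5 ^ 2 = 5 := Real.sq_sqrt (by norm_num)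
  have hs0 : (0:ℝ) ≤ Real.sqrt 5 := Real.sqrt_nonneg 5
  have hkr : (k:ℝ) * (r:ℝ) ≤ (ℓ:ℝ)^2 := by
    rw [hrcast]
    nlinarith [sq_nonneg (2*(k:ℝ) - (Real.sqrt 5 + 1) * (ℓ:ℝ)), sq_nonneg ((k:ℝ) - (ℓ:ℝ))]
  have hmain : ((k:ℝ)^r / (Nat.factorial r : ℝ)) * ((r:ℝ)/(ℓ:ℝ)^2) ^ r < 1 := by
    have heq : ((k:ℝ)^r / (Nat.factorial r : ℝ)) * ((r:ℝ)/(ℓ:ℝ)^2) ^ r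
        = ((k:ℝ) * (r:ℝ)/(ℓ:ℝ)^2) ^ r / (Nat.factorial r : ℝ) := by
      rw [div_pow, div_pow, mul_pow]
      ring
    rw [heq, div_lt_one hfacpos]
    rcases eq_or_lt_of_le hr1 with h | h
    · -- r = 1
      have hk2 : (k:ℝ) < (ℓ:ℝ)^2 := by
        have h5lt : Real.sqrt 5 < 3 := by nlinarith
        nlinarith [mul_nonneg (sub_nonneg.2 hℓ2) hℓpos.le]
      have h1' : r = 1 := h.symm
      rw [h1']
      simp only [pow_one, Nat.factorial_one, Nat.cast_one]
      rw [div_lt_one (by positivity)]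
      push_cast
      linarith
    · -- r ≥ 2
      have h2r : 2 ≤ r := h
      have hfac2 : (2:ℝ) ≤ (Nat.factorial r : ℝ) := by
        have : 2 ≤ Nat.factorial r := le_trans h2r (Nat.self_le_factorial r)
        exact_mod_cast this
      have hle1 : ((k:ℝ) * (r:ℝ)/(ℓ:ℝ)^2) ^ r ≤ 1 := by
        apply pow_le_one₀ (by positivity)
        rw [div_le_one (by positivity)]
        exact hkr
      linarith
  calc (Nat.choose k ℓ : ℝ) * (1 - ((ℓ:ℝ)/(k:ℝ)) ^ (1/(ℓ:ℝ))) ^ r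
      ≤ ((k:ℝ)^r / (Nat.factorial r : ℝ)) * ((r:ℝ)/(ℓ:ℝ)^2) ^ r := by
        apply mul_le_mul hchoose hpow (pow_nonneg hnn r) (by positivity)
    _ < 1 := hmain
end

section
/- For all integers ℓ and k with 2 ≤ ℓ < k and k ≥ 29·ℓ, the inequality C(k,ℓ)·(1 − (ℓ/k)^{1/ℓ})^{k−ℓ} < 1 holds. -/
lemma key_log_ineq (t : ℝ) (ht : 29 ≤ t) : 1 + Real.log t < (t - 1) / Real.sqrt t := by
  set s := Real.sqrt t with hs
  have hs0 : 0 < s := Real.sqrt_pos.mpr (by linarith)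
  have hs2 : s ^ 2 = t := Real.sq_sqrt (by linarith)
  have hsge : (5.38 : ℝ) ≤ s := by nlinarith
  have hlogt : Real.log t = 2 * Real.log s := by
    rw [← hs2, Real.log_pow]; push_cast; ring
  have hlog4 : Real.log 4 < 1.3862943616 := by
    have h2 : Real.log 2 < 0.6931471808 := Real.log_two_lt_d9
    have : Real.log 4 = 2 * Real.log 2 := by
      rw [show (4:ℝ) = 2 ^ 2 by norm_num, Real.log_pow]; push_cast; ring
    linarith
  have hls : Real.log s ≤ s / 4 - 1 + Real.log 4 := by
    have h := Real.log_le_sub_one_of_pos (show 0 < s / 4 by linarith)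
    have hd : Real.log (s / 4) = Real.log s - Real.log 4 :=
      Real.log_div (ne_of_gt hs0) (by norm_num)
    linarith
  rw [lt_div_iff₀ hs0]
  nlinarith [sq_nonneg (s - 5.38)]

theorem choose_mul_pow_lt_one_large_k (k ℓ : ℕ) (hℓ : 2 ≤ ℓ) (hℓk : ℓ < k)
    (hk : 29 * ℓ ≤ k) :
    (Nat.choose k ℓ : ℝ) * (1 - ((ℓ:ℝ) / (k:ℝ)) ^ (1 / (ℓ:ℝ))) ^ (k - ℓ) < 1 := by
  set L : ℝ := (ℓ : ℝ) with hLdef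
  set K : ℝ := (k : ℝ) with hKdef
  have hL2 : (2:ℝ) ≤ L := by rw [hLdef]; exact_mod_cast hℓ
  have hL0 : (0:ℝ) < L := by linarith
  have hKL : L < K := by rw [hLdef, hKdef]; exact_mod_cast hℓk
  have hK0 : (0:ℝ) < K := by linarith
  have h29 : 29 * L ≤ K := by rw [hLdef, hKdef]; exact_mod_cast hk
  set t : ℝ := K / L with htdef
  have ht29 : (29:ℝ) ≤ t := by rw [le_div_iff₀ hL0]; linarith
  have ht0 : (0:ℝ) < t := by linarith
  set x : ℝ := (L / K) ^ (1 / L : ℝ) with hxdef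
  have hbase0 : 0 < L / K := div_pos hL0 hK0
  have hbase1 : L / K < 1 := (div_lt_one hK0).mpr hKL
  have hx0 : 0 < x := Real.rpow_pos_of_pos hbase0 _
  have hx1 : x < 1 := Real.rpow_lt_one hbase0.le hbase1 (by positivity)
  have hst0 : 0 < Real.sqrt t := Real.sqrt_pos.mpr ht0
  -- lower bound on x
  have hsqle : 1 / Real.sqrt t ≤ x := by
    have h1 : (L / K) ^ ((1:ℝ)/2) ≤ x := by
      apply Real.rpow_le_rpow_of_exponent_ge hbase0 hbase1.le
      rw [div_le_div_iff₀ hL0 (by norm_num)]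
      linarith
    have h2 : (L / K) ^ ((1:ℝ)/2) = 1 / Real.sqrt t := by
      rw [← Real.sqrt_eq_rpow]
      rw [show L / K = t⁻¹ by rw [htdef]; field_simp]
      rw [Real.sqrt_inv, one_div]
    linarith [h2 ▸ h1]
  have hcast : ((k - ℓ : ℕ) : ℝ) = K - L := by
    rw [Nat.cast_sub hℓk.le]
  -- bound the power term
  have h1 : (1 - x) ^ (k - ℓ) ≤ Real.exp (-((K - L) * x)) := by
    have h1x : 1 - x ≤ Real.exp (-x) := by
      have := Real.add_one_le_exp (-x); linarith
    calc (1 - x) ^ (k - ℓ) ≤ (Real.exp (-x)) ^ (k - ℓ) :=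
          pow_le_pow_left₀ (by linarith) h1x _
      _ = Real.exp (((k - ℓ : ℕ) : ℝ) * (-x)) := by rw [← Real.exp_nat_mul]
      _ = Real.exp (-((K - L) * x)) := by rw [hcast]; ring_nf
  -- bound the binomial coefficient
  have hfac0 : (0:ℝ) < (Nat.factorial ℓ : ℝ) := by positivity
  have hchoose : (Nat.choose k ℓ : ℝ) ≤ K ^ ℓ / (Nat.factorial ℓ : ℝ) :=
    Nat.choose_le_pow_div ℓ k
  have hfact : L ^ ℓ / (Nat.factorial ℓ : ℝ) ≤ Real.exp L :=
    Real.pow_div_factorial_le_exp L hL0.le ℓ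
  have hchoose2 : (Nat.choose k ℓ : ℝ) ≤ Real.exp (L * Real.log t + L) := by
    have heq : K ^ ℓ / (Nat.factorial ℓ : ℝ) = t ^ ℓ * (L ^ ℓ / (Nat.factorial ℓ : ℝ)) := by
      rw [htdef, div_pow]
      field_simp
    have htpow : t ^ ℓ = Real.exp (L * Real.log t) := by
      rw [← Real.exp_log ht0, ← Real.exp_nat_mul, Real.exp_log ht0, hLdef]
    calc (Nat.choose k ℓ : ℝ) ≤ K ^ ℓ / (Nat.factorial ℓ : ℝ) := hchoose
      _ = t ^ ℓ * (L ^ ℓ / (Nat.factorial ℓ : ℝ)) := heq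
      _ ≤ t ^ ℓ * Real.exp L := by
          apply mul_le_mul_of_nonneg_left hfact (by positivity)
      _ = Real.exp (L * Real.log t + L) := by rw [htpow, ← Real.exp_add]
  -- the main inequality on exponents
  have hmain : L * Real.log t + L - (K - L) * x < 0 := by
    have hKLt : K - L = L * (t - 1) := by rw [htdef]; field_simp
    have hkey := key_log_ineq t ht29
    have ht1 : (1:ℝ) < t := by linarith
    have h2 : L * (t - 1) * (1 / Real.sqrt t) ≤ (K - L) * x := by
      rw [hKLt]
      apply mul_le_mul_of_nonneg_left hsqle
      nlinarith
    have h3 : L * (1 + Real.log t) < L * ((t - 1) / Real.sqrt t) :=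
      mul_lt_mul_of_pos_left hkey hL0
    have h4 : L * ((t - 1) / Real.sqrt t) = L * (t - 1) * (1 / Real.sqrt t) := by ring
    nlinarith
  -- combine
  calc (Nat.choose k ℓ : ℝ) * (1 - x) ^ (k - ℓ)
      ≤ Real.exp (L * Real.log t + L) * Real.exp (-((K - L) * x)) := by
        apply mul_le_mul hchoose2 h1 (pow_nonneg (by linarith) _) (Real.exp_pos _).le
    _ = Real.exp (L * Real.log t + L - (K - L) * x) := by
        rw [← Real.exp_add]; ring_nf
    _ < 1 := Real.exp_lt_one_iff.mpr hmain
end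

section
/- For all integers ℓ and k with ℓ ≥ 3947, ((√5+1)/2)·ℓ < k, and k < 29·ℓ, the inequality C(k,ℓ)·(1 − (ℓ/k)^{1/ℓ})^{k−ℓ} < 1 holds. -/
lemma aux_pow_le_exp_mul_factorial (m : ℕ) : ((m:ℝ))^m ≤ Real.exp m * m.factorial := by
  have h := Real.sum_le_exp_of_nonneg (x := (m:ℝ)) (by positivity) (m+1)
  have h1 : ((m:ℝ))^m / m.factorial ≤ Real.exp m := by
    refine le_trans ?_ h
    exact Finset.single_le_sum (f := fun i => (m:ℝ)^i / i.factorial)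
      (fun i _ => by positivity) (Finset.self_mem_range_succ m)
  have hf : (0:ℝ) < m.factorial := by positivity
  calc ((m:ℝ))^m = ((m:ℝ))^m / m.factorial * m.factorial := by field_simp
    _ ≤ Real.exp m * m.factorial := by gcongr

theorem choose_mul_pow_lt_one_middle_k (k ℓ : ℕ) (hℓ : 3947 ≤ ℓ)
    (hlow : ((Real.sqrt 5 + 1) / 2) * (ℓ:ℝ) < (k:ℝ)) (hhigh : k < 29 * ℓ) :
    (Nat.choose k ℓ : ℝ) * (1 - ((ℓ:ℝ) / (k:ℝ)) ^ (1 / (ℓ:ℝ))) ^ (k - ℓ) < 1 := by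
  have hs5 : (2:ℝ) ≤ Real.sqrt 5 := by
    rw [show (2:ℝ) = Real.sqrt 4 by rw [show (4:ℝ) = 2^2 by norm_num, Real.sqrt_sq]; norm_num]
    exact Real.sqrt_le_sqrt (by norm_num)
  have hℓR : (3947:ℝ) ≤ (ℓ:ℝ) := by exact_mod_cast hℓ
  have hℓ0 : (0:ℝ) < ℓ := by linarith
  have hkR : (3/2:ℝ) * ℓ < k := by nlinarith
  have hkℓ : ℓ < k := by exact_mod_cast (by nlinarith : (ℓ:ℝ) < k)
  have hk0 : (0:ℝ) < k := by linarith
  set m := k - ℓ with hmdef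
  have hmR : (m:ℝ) = (k:ℝ) - ℓ := by rw [hmdef, Nat.cast_sub hkℓ.le]
  have hm0 : 0 < m := Nat.sub_pos_of_lt hkℓ
  have hmhalf : (ℓ:ℝ)/2 < m := by rw [hmR]; linarith
  have hhighR : (k:ℝ) < 29 * ℓ := by exact_mod_cast hhigh
  set L := Real.log ((k:ℝ)/ℓ) with hLdef
  have hL0 : 0 ≤ L := Real.log_nonneg (by rw [le_div_iff₀ hℓ0]; linarith)
  have hL : L < 3.5 := by
    have h1 : L ≤ Real.log 32 :=
      Real.log_le_log (by positivity) (by rw [div_le_iff₀ hℓ0]; nlinarith)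
    have h2 : Real.log 32 = 5 * Real.log 2 := by
      rw [show (32:ℝ) = 2^5 by norm_num, Real.log_pow]; push_cast; ring
    have := Real.log_two_lt_d9
    linarith
  have hr : 1 - ((ℓ:ℝ)/k) ^ (1/(ℓ:ℝ)) ≤ L / ℓ := by
    have hx : (0:ℝ) < (ℓ:ℝ)/k := by positivity
    rw [Real.rpow_def_of_pos hx]
    have h2 := Real.add_one_le_exp (Real.log ((ℓ:ℝ)/k) * (1/(ℓ:ℝ)))
    have h3 : Real.log ((ℓ:ℝ)/k) = -L := by
      rw [hLdef, ← Real.log_inv]; congr 1; field_simp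
    rw [h3] at h2 ⊢
    have h4 : -L * (1/(ℓ:ℝ)) = -(L/ℓ) := by ring
    rw [h4] at h2 ⊢; linarith
  have hr0 : 0 ≤ 1 - ((ℓ:ℝ)/k) ^ (1/(ℓ:ℝ)) := by
    have : ((ℓ:ℝ)/k) ^ (1/(ℓ:ℝ)) ≤ 1 :=
      Real.rpow_le_one (by positivity) (by rw [div_le_one hk0]; linarith) (by positivity)
    linarith
  have hchoose : (Nat.choose k ℓ : ℝ) ≤ (k:ℝ)^m / m.factorial := by
    have h := Nat.choose_le_pow_div (α := ℝ) m k
    rwa [Nat.choose_symm hkℓ.le] at h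
  set x : ℝ := (k:ℝ) * L / ℓ with hxdef
  have hx0 : 0 ≤ x := by positivity
  have hf0 : (0:ℝ) < m.factorial := by positivity
  have hex : Real.exp 1 * x < m := by
    have he : Real.exp 1 < 3 := by
      have := Real.exp_one_lt_d9; linarith
    have he0 : 0 < Real.exp 1 := Real.exp_pos 1
    rw [hxdef, mul_div_assoc', div_lt_iff₀ hℓ0]
    nlinarith [mul_nonneg hk0.le hL0,
      mul_nonneg (by linarith : (0:ℝ) ≤ 3 - Real.exp 1) (mul_nonneg hk0.le hL0),
      mul_nonneg hk0.le (by linarith : (0:ℝ) ≤ 3.5 - L),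
      mul_pos hℓ0 (show (0:ℝ) < (m:ℝ) - (ℓ:ℝ)/2 by linarith)]
  have hxm : x ^ m < m.factorial := by
    have h1 : (Real.exp 1 * x) ^ m < (m:ℝ) ^ m := by
      apply pow_lt_pow_left₀ hex (by positivity) hm0.ne'
    have h2 : (Real.exp 1 * x) ^ m = Real.exp m * x ^ m := by
      rw [mul_pow, ← Real.exp_one_pow]
    have h3 := aux_pow_le_exp_mul_factorial m
    have hem : (0:ℝ) < Real.exp m := Real.exp_pos _
    nlinarith [pow_nonneg hx0 m]
  calc (Nat.choose k ℓ : ℝ) * (1 - ((ℓ:ℝ)/k) ^ (1/(ℓ:ℝ))) ^ m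
      ≤ ((k:ℝ)^m / m.factorial) * (L/ℓ) ^ m := by
        apply mul_le_mul hchoose (pow_le_pow_left₀ hr0 hr m) (pow_nonneg hr0 m) (by positivity)
    _ = x ^ m / m.factorial := by rw [hxdef, div_pow, div_pow, mul_pow]; ring
    _ < 1 := by rw [div_lt_one hf0]; exact hxm
end

section
/- For every integer k ≥ 2, taking p = 1/k and ℓ = 1: U_{k,1,1/k}(k) = 1, and U_{k,1,1/k}(T) < U_{k,1,1/k}(T+1) for every integer 1 ≤ T ≤ k−1; in particular U_{k,1,1/k}(T) < 1 for all 1 ≤ T ≤ k−1. -/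
open Finset

theorem U_at_one_over_k (k : ℕ) (hk : 2 ≤ k) :
    Ufun k 1 (1 / (k:ℝ)) k = 1 ∧
    (∀ T : ℕ, 1 ≤ T → T ≤ k - 1 →
      Ufun k 1 (1 / (k:ℝ)) T < Ufun k 1 (1 / (k:ℝ)) (T + 1)) ∧
    (∀ T : ℕ, 1 ≤ T → T ≤ k - 1 → Ufun k 1 (1 / (k:ℝ)) T < 1) := by
  have hK2 : (2:ℝ) ≤ (k:ℝ) := by exact_mod_cast hk
  have hK0 : (0:ℝ) < (k:ℝ) := by linarith
  set p : ℝ := 1 / (k:ℝ) with hp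
  have hKp : (k:ℝ) * p = 1 := by
    rw [hp]; field_simp
  have hp0 : 0 < p := by rw [hp]; positivity
  have hq0 : 0 < 1 - p := by
    have : p ≤ 1/2 := by
      rw [hp, div_le_div_iff₀ hK0 (by norm_num)]; linarith
    linarith
  set f : ℕ → ℝ := fun t => (Nat.choose k t : ℝ) * p ^ t * (1 - p) ^ (k - t) with hf
  have hfpos : ∀ t, t ≤ k → 0 < f t := by
    intro t ht
    have hc : 0 < (Nat.choose k t : ℝ) := by exact_mod_cast Nat.choose_pos ht
    rw [hf]; positivity
  -- binomial theorem
  have binom : ∀ n : ℕ,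
      ∑ t ∈ range (n+1), (Nat.choose n t : ℝ) * p ^ t * (1-p) ^ (n - t) = 1 := by
    intro n
    have h := add_pow p (1-p) n
    have hpq : p + (1-p) = 1 := by ring
    rw [hpq, one_pow] at h
    calc ∑ t ∈ range (n+1), (Nat.choose n t : ℝ) * p ^ t * (1-p) ^ (n - t)
        = ∑ t ∈ range (n+1), p ^ t * (1-p) ^ (n - t) * (Nat.choose n t : ℝ) := by
          apply sum_congr rfl; intro t _; ring
      _ = 1 := h.symm
  have sum_f : ∑ t ∈ range (k+1), f t = 1 := binom k
  -- the nat identity k * C(k-1, i) = C(k, i+1) * (i+1)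
  have hid : ∀ i : ℕ, k * Nat.choose (k-1) i = Nat.choose k (i+1) * (i+1) := by
    intro i
    have h := Nat.add_one_mul_choose_eq (k-1) i
    have hk1 : k - 1 + 1 = k := by omega
    simpa [Nat.succ_eq_add_one, hk1] using h
  -- mean
  have mean : ∑ t ∈ range (k+1), (t:ℝ) * f t = 1 := by
    rw [Finset.sum_range_succ']
    simp only [Nat.cast_zero, zero_mul, add_zero]
    have step : ∀ i ∈ range k, ((i+1 : ℕ):ℝ) * f (i+1)
        = ((k:ℝ) * p) * ((Nat.choose (k-1) i : ℝ) * p ^ i * (1-p) ^ ((k-1) - i)) := by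
      intro i hi
      have hi' : i < k := mem_range.mp hi
      have hexp : k - (i+1) = (k-1) - i := by omega
      have hcast : (k:ℝ) * (Nat.choose (k-1) i : ℝ)
          = (Nat.choose k (i+1) : ℝ) * ((i+1 : ℕ):ℝ) := by
        exact_mod_cast congrArg (Nat.cast : ℕ → ℝ) (hid i)
      rw [hf]
      simp only [hexp]
      have : p ^ (i+1) = p * p ^ i := by rw [pow_succ]; ring
      rw [this]
      push_cast at hcast ⊢
      linear_combination (-(p * p ^ i * (1-p) ^ ((k-1) - i))) * hcast
    rw [sum_congr rfl step, ← mul_sum]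
    have hbr : ∑ i ∈ range k, (Nat.choose (k-1) i : ℝ) * p ^ i * (1-p) ^ ((k-1) - i) = 1 := by
      have := binom (k-1)
      have hk1 : k - 1 + 1 = k := by omega
      rwa [hk1] at this
    rw [hbr, hKp, mul_one]
  -- simplified form of Ufun
  have Ueq : ∀ T : ℕ, Ufun k 1 p T = (T:ℝ) - ∑ t ∈ range (T+1), ((T:ℝ) - t) * f t := by
    intro T
    unfold Ufun
    rw [Nat.cast_one, div_one, mul_sum]
    congr 1
    apply sum_congr rfl
    intro t _
    rw [hf]
    have hpp : p ^ (1 + t) = p * p ^ t := by rw [pow_add, pow_one]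
    calc (k:ℝ) * (((T:ℝ) - t) * (Nat.choose k t : ℝ) * p ^ (1+t) * (1-p) ^ (k-t))
        = ((k:ℝ) * p) * (((T:ℝ) - t) * ((Nat.choose k t : ℝ) * p ^ t * (1-p) ^ (k-t))) := by
          rw [hpp]; ring
      _ = ((T:ℝ) - t) * ((Nat.choose k t : ℝ) * p ^ t * (1-p) ^ (k-t)) := by
          rw [hKp]; ring
  set S : ℕ → ℝ := fun T => ∑ t ∈ range (T+1), f t with hS
  -- difference formula
  have diff : ∀ T : ℕ, Ufun k 1 p (T+1) = Ufun k 1 p T + (1 - S T) := by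
    intro T
    rw [Ueq, Ueq]
    have h1 : ∑ t ∈ range (T+1+1), (((T+1 : ℕ):ℝ) - t) * f t
        = ∑ t ∈ range (T+1), (((T+1 : ℕ):ℝ) - t) * f t := by
      rw [sum_range_succ]
      have : (((T+1 : ℕ):ℝ) - ((T+1 : ℕ):ℝ)) * f (T+1) = 0 := by ring
      rw [this, add_zero]
    have h2 : ∑ t ∈ range (T+1), (((T+1 : ℕ):ℝ) - t) * f t
        = (∑ t ∈ range (T+1), ((T:ℝ) - t) * f t) + S T := by
      rw [hS, ← sum_add_distrib]
      apply sum_congr rfl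
      intro t _
      push_cast
      ring
    rw [h1, h2]
    push_cast
    ring
  -- S T < 1 for T ≤ k - 1
  have hSlt : ∀ T : ℕ, T ≤ k - 1 → S T < 1 := by
    intro T hT
    have hsub : range (T+1) ⊆ range (k+1) := by
      apply range_subset_range.mpr; omega
    calc S T < ∑ t ∈ range (k+1), f t := by
          refine sum_lt_sum_of_subset hsub (i := k) (mem_range.mpr (by omega))
            (by simp only [mem_range]; omega) (hfpos k le_rfl) ?_
          intro j hj _
          exact (hfpos j (Nat.lt_succ_iff.mp (mem_range.mp hj))).le
      _ = 1 := sum_f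
  -- U(k) = 1
  have hUk : Ufun k 1 p k = 1 := by
    rw [Ueq]
    have h : ∑ t ∈ range (k+1), ((k:ℝ) - t) * f t = (k:ℝ) - 1 := by
      have : ∑ t ∈ range (k+1), ((k:ℝ) - t) * f t
          = (∑ t ∈ range (k+1), (k:ℝ) * f t) - ∑ t ∈ range (k+1), (t:ℝ) * f t := by
        rw [← sum_sub_distrib]
        apply sum_congr rfl
        intro t _; ring
      rw [this, ← mul_sum, sum_f, mean, mul_one]
    rw [h]; ring
  have hmono : ∀ T : ℕ, 1 ≤ T → T ≤ k - 1 → Ufun k 1 p T < Ufun k 1 p (T+1) := by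
    intro T _ hT
    rw [diff T]
    have := hSlt T hT
    linarith
  refine ⟨hUk, hmono, ?_⟩
  have key : ∀ d : ℕ, ∀ T : ℕ, 1 ≤ T → T ≤ k - 1 → k - 1 - T = d → Ufun k 1 p T < 1 := by
    intro d
    induction d with
    | zero =>
      intro T h1 h2 h3
      have hT : T + 1 = k := by omega
      have := hmono T h1 h2
      rw [hT, hUk] at this
      exact this
    | succ n ih =>
      intro T h1 h2 h3
      have h4 : T + 1 ≤ k - 1 := by omega
      have := hmono T h1 h2
      have h5 := ih (T+1) (by omega) h4 (by omega)
      linarith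
  intro T h1 h2
  exact key (k - 1 - T) T h1 h2 rfl
end

section
/- Let k ≥ 3 be an integer, let p ∈ (0,1) be real, and let T be an integer with 1 < T < k. If U_{k,1,p}(T) < U_{k,1,p}(T−1), then U_{k,1,p}(T+1) < U_{k,1,p}(T). -/
open Finset

lemma Udiff (k : ℕ) (p : ℝ) (S : ℕ) :
    Ufun k 1 p (S + 1) - Ufun k 1 p S =
      1 - (k : ℝ) * ∑ t ∈ Finset.range (S + 1),
        (Nat.choose k t : ℝ) * p ^ (1 + t) * (1 - p) ^ (k - t) := by
  have hA : (∑ t ∈ Finset.range (S + 1),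
        (((S : ℝ) + 1) - (t : ℝ)) * (Nat.choose k t : ℝ) * p ^ (1 + t) * (1 - p) ^ (k - t))
      - (∑ t ∈ Finset.range (S + 1),
        ((S : ℝ) - (t : ℝ)) * (Nat.choose k t : ℝ) * p ^ (1 + t) * (1 - p) ^ (k - t))
      = ∑ t ∈ Finset.range (S + 1),
        (Nat.choose k t : ℝ) * p ^ (1 + t) * (1 - p) ^ (k - t) := by
    rw [← Finset.sum_sub_distrib]
    apply Finset.sum_congr rfl
    intro t _
    ring
  unfold Ufun
  rw [Finset.sum_range_succ]
  push_cast
  linear_combination (-(k : ℝ)) * hA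

theorem U_decreasing_propagates (k : ℕ) (hk : 3 ≤ k) (p : ℝ)
    (hp : p ∈ Set.Ioo (0:ℝ) 1) (T : ℕ) (hT1 : 1 < T) (hTk : T < k)
    (h : Ufun k 1 p T < Ufun k 1 p (T - 1)) :
    Ufun k 1 p (T + 1) < Ufun k 1 p T := by
  obtain ⟨hp0, hp1⟩ := hp
  have hS : T - 1 + 1 = T := by omega
  have h1 : Ufun k 1 p T - Ufun k 1 p (T - 1) =
      1 - (k : ℝ) * ∑ t ∈ Finset.range T,
        (Nat.choose k t : ℝ) * p ^ (1 + t) * (1 - p) ^ (k - t) := by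
    have := Udiff k p (T - 1)
    rwa [hS] at this
  have h2 := Udiff k p T
  have hsum : ∑ t ∈ Finset.range T,
        (Nat.choose k t : ℝ) * p ^ (1 + t) * (1 - p) ^ (k - t)
      ≤ ∑ t ∈ Finset.range (T + 1),
        (Nat.choose k t : ℝ) * p ^ (1 + t) * (1 - p) ^ (k - t) := by
    rw [Finset.sum_range_succ]
    have h1p : (0:ℝ) ≤ 1 - p := by linarith
    have : 0 ≤ (Nat.choose k T : ℝ) * p ^ (1 + T) * (1 - p) ^ (k - T) :=
      mul_nonneg (mul_nonneg (Nat.cast_nonneg _) (pow_nonneg hp0.le _)) (pow_nonneg h1p _)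
    linarith
  have hk0 : (0 : ℝ) ≤ (k : ℝ) := by positivity
  have := mul_le_mul_of_nonneg_left hsum hk0
  linarith
end

section
/- Let k ≥ 2 be an integer, let p ∈ (0,1) be real, and let T be an integer with 1 ≤ T ≤ k−1. If the derivative with respect to p of the function p ↦ U_{k,1,p}(T) at p is strictly negative, then the derivative with respect to p of the function p ↦ U_{k,1,p}(T+1) at p is also strictly negative. -/
open Finset

/-!
Write `b_t = C(k,t) p^t (1-p)^(k-t)` for the Bernstein basis. Since `(k+1) X b_{k,t} = (t+1) b_{k+1,t+1}`,
the derivative of `p b_t` is `w_t = (t+1)(b_t - b_{t+1})`, so `dU(N)/dp = -k S_N` with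
`S_N = ∑_{t ≤ N} (N - t) w_t`. The ratio identity `(1-p) w_t = (t - c) b_t`, `c = (k+1)p - 1`, shows that
`w_t` changes sign once, at `c`. For any sequence with this property, `S_N > 0` forces `N > c`, and
`(N - c) S_{N+1} = (N + 1 - c) S_N + ∑_{t ≤ N} (t - c) w_t`, so `S_{N+1} > 0` as well.
-/

open Polynomial

namespace bernsteinPolynomial

variable {R : Type*} [CommRing R]

theorem natCast_succ_mul_X_mul (k t : ℕ) :
    ((k + 1 : ℕ) : R[X]) * (X * bernsteinPolynomial R k t)
      = ((t + 1 : ℕ) : R[X]) * bernsteinPolynomial R (k + 1) (t + 1) := by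
  have hchoose := congrArg (Nat.cast (R := R[X])) (Nat.add_one_mul_choose_eq k t)
  push_cast at hchoose ⊢
  simp only [bernsteinPolynomial, Nat.add_sub_add_right]
  linear_combination X ^ (t + 1) * (1 - X) ^ (k - t) * hchoose

theorem derivative_X_mul [IsDomain R] [CharZero R] (k t : ℕ) :
    derivative (X * bernsteinPolynomial R k t)
      = ((t : R[X]) + 1) * (bernsteinPolynomial R k t - bernsteinPolynomial R k (t + 1)) := by
  have hk : ((k + 1 : ℕ) : R[X]) ≠ 0 := Nat.cast_ne_zero.mpr k.succ_ne_zero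
  apply mul_left_cancel₀ hk
  have h := congrArg derivative (natCast_succ_mul_X_mul (R := R) k t)
  rw [derivative_natCast_mul, derivative_natCast_mul, derivative_succ_aux] at h
  rw [h]
  push_cast
  ring

theorem one_sub_X_mul_sub_succ (k t : ℕ) :
    ((t : R[X]) + 1) * (1 - X) * (bernsteinPolynomial R k t - bernsteinPolynomial R k (t + 1))
      = ((t : R[X]) + 1 - ((k : R[X]) + 1) * X) * bernsteinPolynomial R k t := by
  rcases lt_trichotomy t k with htk | rfl | hkt
  · obtain ⟨j, rfl⟩ := Nat.exists_eq_add_of_lt htk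
    have hchoose := congrArg (Nat.cast (R := R[X])) (Nat.choose_succ_right_eq (t + j + 1) t)
    simp only [bernsteinPolynomial, show t + j + 1 - (t + 1) = j by omega,
      show t + j + 1 - t = j + 1 by omega] at hchoose ⊢
    push_cast at hchoose ⊢
    linear_combination -(X ^ (t + 1) * (1 - X) ^ (j + 1)) * hchoose
  · rw [eq_zero_of_lt R t.lt_succ_self]
    simp only [bernsteinPolynomial, Nat.choose_self, tsub_self, pow_zero]
    push_cast
    ring
  · simp [eq_zero_of_lt R hkt, eq_zero_of_lt R (hkt.trans t.lt_succ_self)]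

theorem eval_nonneg {k t : ℕ} {p : ℝ} (hp0 : 0 ≤ p) (hp1 : p ≤ 1) :
    0 ≤ (bernsteinPolynomial ℝ k t).eval p := by
  have : 0 ≤ 1 - p := sub_nonneg.mpr hp1
  simp only [bernsteinPolynomial, eval_mul, eval_pow, eval_sub, eval_one, eval_X, eval_natCast]
  positivity

theorem sub_mul_eval_sub_eval_succ_nonneg {k : ℕ} {p : ℝ} (hp0 : 0 ≤ p) (hp1 : p < 1) (t : ℕ) :
    0 ≤ (t - ((k + 1) * p - 1)) *
      ((t + 1) * ((bernsteinPolynomial ℝ k t).eval p - (bernsteinPolynomial ℝ k (t + 1)).eval p)) := by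
  have hratio := congrArg (eval p) (one_sub_X_mul_sub_succ (R := ℝ) k t)
  simp only [eval_mul, eval_sub, eval_add, eval_one, eval_X, eval_natCast] at hratio
  have hb := eval_nonneg (k := k) (t := t) hp0 hp1.le
  refine nonneg_of_mul_nonneg_right (a := 1 - p) ?_ (sub_pos.mpr hp1)
  calc (0 : ℝ) ≤ (t + 1 - (k + 1) * p) ^ 2 * (bernsteinPolynomial ℝ k t).eval p := by positivity
    _ = _ := by linear_combination -(t + 1 - (k + 1) * p) * hratio

end bernsteinPolynomial

def iteratedPartialSum (w : ℕ → ℝ) (N : ℕ) : ℝ :=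
  ∑ t ∈ range (N + 1), ((N : ℝ) - t) * w t

section SignChange

variable {w : ℕ → ℝ} {c : ℝ}

theorem iteratedPartialSum_nonpos_of_le (hw : ∀ t : ℕ, 0 ≤ (t - c) * w t) {N : ℕ}
    (hN : (N : ℝ) ≤ c) : iteratedPartialSum w N ≤ 0 := by
  refine sum_nonpos fun t ht => ?_
  obtain htN | rfl := (Nat.lt_succ_iff.mp (mem_range.mp ht)).lt_or_eq
  · have htN' : (t : ℝ) < N := Nat.cast_lt.mpr htN
    have hwt : w t ≤ 0 := nonpos_of_mul_nonneg_right (hw t) (by linarith)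
    exact mul_nonpos_of_nonneg_of_nonpos (by linarith) hwt
  · simp

theorem sub_mul_iteratedPartialSum_succ (w : ℕ → ℝ) (c : ℝ) (N : ℕ) :
    (N - c) * iteratedPartialSum w (N + 1)
      = (N + 1 - c) * iteratedPartialSum w N + ∑ t ∈ range (N + 1), (t - c) * w t := by
  rw [iteratedPartialSum, iteratedPartialSum, sum_range_succ, sub_self, zero_mul, add_zero,
    mul_sum, mul_sum, ← sum_add_distrib]
  exact sum_congr rfl fun t _ => by push_cast; ring

theorem iteratedPartialSum_succ_pos (hw : ∀ t : ℕ, 0 ≤ (t - c) * w t) {N : ℕ}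
    (h : 0 < iteratedPartialSum w N) : 0 < iteratedPartialSum w (N + 1) := by
  have hcN : c < N := not_le.mp fun hN => h.not_ge (iteratedPartialSum_nonpos_of_le hw hN)
  have hsum : 0 ≤ ∑ t ∈ range (N + 1), (t - c) * w t := sum_nonneg fun t _ => hw t
  have hprod : 0 < (N - c) * iteratedPartialSum w (N + 1) := by
    rw [sub_mul_iteratedPartialSum_succ]
    have : 0 < (N + 1 - c) * iteratedPartialSum w N := mul_pos (by linarith) h
    linarith
  exact pos_of_mul_pos_right hprod (by linarith)

end SignChange

theorem hasDerivAt_Ufun_one (k N : ℕ) (p : ℝ) :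
    HasDerivAt (fun q => Ufun k 1 q N)
      (-(k * iteratedPartialSum (fun t => (t + 1) *
        ((bernsteinPolynomial ℝ k t).eval p - (bernsteinPolynomial ℝ k (t + 1)).eval p)) N)) p := by
  have hU : (fun q => Ufun k 1 q N) = fun q =>
      (N : ℝ) - k * ∑ t ∈ range (N + 1), ((N : ℝ) - t) * (X * bernsteinPolynomial ℝ k t).eval q := by
    funext q
    simp only [Ufun, Nat.cast_one, div_one]
    congr 2
    refine sum_congr rfl fun t _ => ?_
    simp only [bernsteinPolynomial, eval_mul, eval_pow, eval_sub, eval_one, eval_X, eval_natCast]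
    ring
  have hterm : ∀ t ∈ range (N + 1),
      HasDerivAt (fun q => ((N : ℝ) - t) * (X * bernsteinPolynomial ℝ k t).eval q)
        (((N : ℝ) - t) * (derivative (X * bernsteinPolynomial ℝ k t)).eval p) p :=
    fun t _ => (Polynomial.hasDerivAt _ p).const_mul _
  rw [hU]
  refine (((HasDerivAt.fun_sum hterm).const_mul (k : ℝ)).const_sub (N : ℝ)).congr_deriv ?_
  simp only [iteratedPartialSum, bernsteinPolynomial.derivative_X_mul, eval_mul, eval_sub,
    eval_add, eval_one, eval_natCast]

theorem deriv_U_neg_propagates_general (k : ℕ) (p : ℝ)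
    (hp : p ∈ Set.Ioo (0:ℝ) 1) (T : ℕ)
    (h : deriv (fun q : ℝ => Ufun k 1 q T) p < 0) :
    deriv (fun q : ℝ => Ufun k 1 q (T + 1)) p < 0 := by
  obtain ⟨hp0, hp1⟩ := hp
  rw [(hasDerivAt_Ufun_one k T p).deriv, neg_lt_zero] at h
  rw [(hasDerivAt_Ufun_one k (T + 1) p).deriv, neg_lt_zero]
  have hS := pos_of_mul_pos_right h k.cast_nonneg
  exact mul_pos (pos_of_mul_pos_left h hS.le) (iteratedPartialSum_succ_pos
    (bernsteinPolynomial.sub_mul_eval_sub_eval_succ_nonneg hp0.le hp1) hS)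

theorem deriv_U_neg_propagates (k : ℕ) (hk : 2 ≤ k) (p : ℝ)
    (hp : p ∈ Set.Ioo (0:ℝ) 1) (T : ℕ) (hT1 : 1 ≤ T) (hTk : T ≤ k - 1)
    (h : deriv (fun q : ℝ => Ufun k 1 q T) p < 0) :
    deriv (fun q : ℝ => Ufun k 1 q (T + 1)) p < 0 :=
  deriv_U_neg_propagates_general k p hp T h
end

section
/- Let k ≥ 3 be an integer and let p ∈ (0,1) be real. If k(k−1)p² > 2(1−p)² and (1/2)·k²(k−1)·p³·(1−p)^{k−2} = 1 − k·p·(1−p)^k − k²·p²·(1−p)^{k−1} (the latter being equivalent to U_{k,1,p}(2) = U_{k,1,p}(3)), then k·(2p(1−p)^k + k·p²·(1−p)^{k−1}) < 1, i.e., U_{k,1,p}(2) > 1. -/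
open Finset

theorem U2_gt_one_when_U2_eq_U3 (k : ℕ) (hk : 3 ≤ k) (p : ℝ)
    (hp : p ∈ Set.Ioo (0:ℝ) 1)
    (h1 : 2 * (1 - p) ^ 2 < (k:ℝ) * ((k:ℝ) - 1) * p ^ 2)
    (h2 : (1/2) * (k:ℝ) ^ 2 * ((k:ℝ) - 1) * p ^ 3 * (1 - p) ^ (k - 2)
        = 1 - (k:ℝ) * p * (1 - p) ^ k - (k:ℝ) ^ 2 * p ^ 2 * (1 - p) ^ (k - 1)) :
    (k:ℝ) * (2 * p * (1 - p) ^ k + (k:ℝ) * p ^ 2 * (1 - p) ^ (k - 1)) < 1 ∧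
    1 < Ufun k 1 p 2 := by
  obtain ⟨hp0, hp1⟩ := hp
  have hq : 0 < 1 - p := by linarith
  have hk2 : k - 2 + 2 = k := by omega
  have hpow : (1 - p) ^ k = (1 - p) ^ (k - 2) * (1 - p) ^ 2 := by
    rw [← pow_add, hk2]
  have hc : 0 < (k : ℝ) * p * (1 - p) ^ (k - 2) := by positivity
  have hXZ : (k:ℝ) * p * (1 - p) ^ k
      < (1/2) * (k:ℝ) ^ 2 * ((k:ℝ) - 1) * p ^ 3 * (1 - p) ^ (k - 2) := by
    rw [hpow]
    nlinarith [mul_lt_mul_of_pos_left h1 hc]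
  have hmain : (k:ℝ) * (2 * p * (1 - p) ^ k + (k:ℝ) * p ^ 2 * (1 - p) ^ (k - 1)) < 1 := by
    nlinarith [hXZ, h2]
  refine ⟨hmain, ?_⟩
  have hU : Ufun k 1 p 2
      = 2 - (k:ℝ) * (2 * p * (1 - p) ^ k + (k:ℝ) * p ^ 2 * (1 - p) ^ (k - 1)) := by
    simp only [Ufun, Finset.sum_range_succ, Finset.sum_range_zero]
    norm_num
  rw [hU]
  linarith
end

section
/- For every integer k ≥ 3, the function f(p) = (1−p)³ + k·p·(1−p)² + (1/2)·k(k−1)·p²·(1−p) − (1/2)·k(k−1)(k−2)·p³ has exactly one zero in the open interval (0,1). -/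
theorem cubic_unique_zero (k : ℕ) (hk : 3 ≤ k) :
    ∃! p : ℝ, p ∈ Set.Ioo (0:ℝ) 1 ∧
      (1 - p) ^ 3 + (k:ℝ) * p * (1 - p) ^ 2
        + (1/2) * (k:ℝ) * ((k:ℝ) - 1) * p ^ 2 * (1 - p)
        - (1/2) * (k:ℝ) * ((k:ℝ) - 1) * ((k:ℝ) - 2) * p ^ 3 = 0 := by
  have hK : (3:ℝ) ≤ (k:ℝ) := by exact_mod_cast hk
  set K : ℝ := (k:ℝ) with hKdef
  set F : ℝ → ℝ := fun p => (1 - p) ^ 3 + K * p * (1 - p) ^ 2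
        + (1/2) * K * (K - 1) * p ^ 2 * (1 - p)
        - (1/2) * K * (K - 1) * (K - 2) * p ^ 3 with hF
  have hcont : ContinuousOn F (Set.Icc (0:ℝ) 1) := by
    apply Continuous.continuousOn; fun_prop
  have hF0 : F 0 = 1 := by simp [hF]
  have hF1 : F 1 = -((1/2) * K * (K - 1) * (K - 2)) := by simp [hF]
  have hF1neg : F 1 < 0 := by
    rw [hF1]
    have h1 : 0 < K := by linarith
    have h2 : 0 < K - 1 := by linarith
    have h3 : 0 < K - 2 := by linarith
    nlinarith [mul_pos (mul_pos h1 h2) h3]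
  have hiv := intermediate_value_Ioo' (le_of_lt (by norm_num : (0:ℝ) < 1)) hcont
  have hmem : (0:ℝ) ∈ Set.Ioo (F 1) (F 0) := ⟨hF1neg, by rw [hF0]; norm_num⟩
  obtain ⟨p, hp, hFp⟩ := hiv hmem
  refine ⟨p, ⟨hp, hFp⟩, ?_⟩
  rintro q ⟨⟨hq0, hq1⟩, hFq⟩
  obtain ⟨hp0, hp1⟩ := hp
  have hFp' : (1 - p) ^ 3 + K * p * (1 - p) ^ 2
        + (1/2) * K * (K - 1) * p ^ 2 * (1 - p)
        - (1/2) * K * (K - 1) * (K - 2) * p ^ 3 = 0 := hFp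
  clear hFp hmem hiv hcont hF0 hF1 hF1neg hF
  have h1 : 0 < K := by linarith
  have h2 : 0 < K - 1 := by linarith
  -- uniqueness: if q ≠ p, contradiction
  by_contra hne
  -- WLOG via a symmetric helper
  have main : ∀ a b : ℝ, 0 < a → a < 1 → 0 < b → b < 1 → a < b →
      (1 - a) ^ 3 + K * a * (1 - a) ^ 2
        + (1/2) * K * (K - 1) * a ^ 2 * (1 - a)
        - (1/2) * K * (K - 1) * (K - 2) * a ^ 3 = 0 →
      (1 - b) ^ 3 + K * b * (1 - b) ^ 2
        + (1/2) * K * (K - 1) * b ^ 2 * (1 - b)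
        - (1/2) * K * (K - 1) * (K - 2) * b ^ 3 = 0 → False := by
    intro a b ha0 ha1 hb0 hb1 hab hfa hfb
    obtain ⟨A, hAdef⟩ : ∃ A : ℝ, A = b * (1 - a) := ⟨_, rfl⟩
    obtain ⟨B, hBdef⟩ : ∃ B : ℝ, B = a * (1 - b) := ⟨_, rfl⟩
    have hA : 0 < A := by rw [hAdef]; exact mul_pos hb0 (by linarith)
    have hB : 0 < B := by rw [hBdef]; exact mul_pos ha0 (by linarith)
    have hAB : 0 < A - B := by
      have : A - B = b - a := by rw [hAdef, hBdef]; ring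
      rw [this]; linarith
    have hsum :
        (A - B) * (A ^ 2 + A * B + B ^ 2)
        + K * (a * b) * ((A - B) * (A + B))
        + (1/2) * K * (K - 1) * (a * b) ^ 2 * (A - B) = 0 := by
      rw [hAdef, hBdef]
      linear_combination b ^ 3 * hfa - a ^ 3 * hfb
    have t1 : 0 < (A - B) * (A ^ 2 + A * B + B ^ 2) :=
      mul_pos hAB (by positivity)
    have t2 : 0 < K * (a * b) * ((A - B) * (A + B)) :=
      mul_pos (mul_pos h1 (mul_pos ha0 hb0)) (mul_pos hAB (add_pos hA hB))
    have t3 : 0 < (1/2) * K * (K - 1) * (a * b) ^ 2 * (A - B) := by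
      have : 0 < (a*b)^2 := by positivity
      have h12 : 0 < (1/2) * K * (K - 1) := by positivity
      exact mul_pos (mul_pos h12 this) hAB
    linarith
  rcases lt_or_gt_of_ne hne with h | h
  · exact main q p hq0 hq1 hp0 hp1 h hFq hFp'
  · exact main p q hp0 hp1 hq0 hq1 h hFp' hFq
end

section
/- Let n, m, k, ℓ be positive integers with ℓ ≤ k and ℓ ≤ m, and let p ∈ [0,1] be real with p^ℓ < ℓ/k. Under the Erdős–Rényi model with parameter p on n voters and m candidates, the probability that there exists a set L ⊆ {1,…,m} with |L| = ℓ such that the number of voters v with L ⊆ A(v) is at least ℓ·n/k is at most C(m,ℓ)·exp(−2·(ℓ/k − p^ℓ)²·n). -/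
/-!
For a fixed set `L` of `ℓ` candidates, a random ballot contains `L` with probability `p ^ ℓ`,
so the number of voters approving all of `L` is a sum of `n` independent Bernoulli(`p ^ ℓ`)
variables. The Chernoff bound, with Hoeffding's lemma `1 - q + q e^s ≤ e^(q s + s² / 8)`
controlling the moment generating function, bounds the probability that this count reaches
`(ℓ / k) n` by `exp (-2 (ℓ / k - p ^ ℓ)² n)`; a union bound over the `C(m, ℓ)` choices of `L`
finishes the proof.
-/

open Finset

/-- Probability of an event `E` on approval profiles with `n` voters and `m` candidates
under the Erdős–Rényi model with parameter `p`: each voter's ballot is drawn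
independently, a subset `S` of the candidates having probability
`p ^ |S| * (1-p) ^ (m - |S|)`. -/
noncomputable def erProb (n m : ℕ) (p : ℝ) (E : Set (Fin n → Finset (Fin m))) : ℝ :=
  ∑ A : Fin n → Finset (Fin m),
    Set.indicator E
      (fun B => ∏ v, p ^ (B v).card * (1 - p) ^ (m - (B v).card)) A

open Real ProbabilityTheory MeasureTheory

lemma one_sub_add_mul_exp_le {q : ℝ} (hq : q ∈ Set.Icc (0 : ℝ) 1) (s : ℝ) :
    1 - q + q * exp s ≤ exp (q * s + s ^ 2 / 8) := by
  set μ : Measure Bool := Ber(true, false, ⟨q, hq⟩)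
  set X : Bool → ℝ := fun b => if b then 1 else 0
  have hmean : μ[X] = q := by simp [μ, X, integral_bernoulliMeasure]
  have hoeffding := (hasSubgaussianMGF_of_mem_Icc (X := X) (μ := μ) (a := 0) (b := 1)
    Measurable.of_discrete.aemeasurable (ae_of_all _ fun b => by cases b <;> simp [X])).mgf_le s
  have hmgf : mgf (fun b => X b - μ[X]) μ s = exp (-(q * s)) * (1 - q + q * exp s) := by
    simp only [mgf, hmean, integral_bernoulliMeasure, ↓reduceIte, smul_eq_mul, Bool.false_eq_true,
      zero_sub, mul_neg, μ, X]
    rw [show s * (1 - q) = -(q * s) + s by ring, exp_add]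
    ring_nf
  rw [hmgf] at hoeffding
  calc 1 - q + q * exp s = exp (q * s) * (exp (-(q * s)) * (1 - q + q * exp s)) := by
        rw [← mul_assoc, ← exp_add, add_neg_cancel, exp_zero, one_mul]
    _ ≤ exp (q * s) * exp (s ^ 2 / 8) := by
        gcongr
        refine hoeffding.trans_eq (congrArg exp ?_)
        norm_num
        ring
    _ = exp (q * s + s ^ 2 / 8) := (exp_add _ _).symm

section Chernoff

variable {α : Type*} [Fintype α] {n : ℕ} (P : α → Prop) [DecidablePred P]

lemma sum_prod_mul_exp_card_eq (w : α → ℝ) (s : ℝ) :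
    ∑ A : Fin n → α, (∏ v, w (A v)) * exp (s * #{v | P (A v)}) =
      (∑ a, w a * if P a then exp s else 1) ^ n := by
  rw [Fintype.sum_pow]
  refine sum_congr rfl fun A _ => ?_
  rw [prod_mul_distrib, prod_ite, prod_const, prod_const, one_pow, mul_one, ← exp_nat_mul,
    mul_comm s]

lemma sum_indicator_card_ge_le {w : α → ℝ} (hw0 : ∀ a, 0 ≤ w a) (hw1 : ∑ a, w a = 1) {t : ℝ}
    (ht : ∑ a with P a, w a ≤ t) :
    ∑ A : Fin n → α, {A : Fin n → α | t * n ≤ #{v | P (A v)}}.indicator (fun A => ∏ v, w (A v)) A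
      ≤ exp (-2 * (t - ∑ a with P a, w a) ^ 2 * n) := by
  set q := ∑ a with P a, w a
  -- minimises `-s (t - q) + s² / 8`, the exponent left after Markov's inequality and Hoeffding
  set s := 4 * (t - q)
  have hs : 0 ≤ s := by linarith
  have hq : q ∈ Set.Icc 0 1 :=
    ⟨sum_nonneg fun a _ => hw0 a, hw1 ▸ sum_le_univ_sum_of_nonneg hw0⟩
  have markov (A : Fin n → α) :
      {A : Fin n → α | t * n ≤ #{v | P (A v)}}.indicator (fun A => ∏ v, w (A v)) A ≤
        exp (-(s * t * n)) * ((∏ v, w (A v)) * exp (s * #{v | P (A v)})) := by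
    have hW : 0 ≤ ∏ v, w (A v) := prod_nonneg fun v _ => hw0 (A v)
    rw [Set.indicator_apply]
    split_ifs with hA
    · rw [mul_left_comm, ← exp_add]
      refine le_mul_of_one_le_right hW (one_le_exp ?_)
      nlinarith [hA.out]
    · positivity
  have mgf_eq : ∑ a, w a * (if P a then exp s else 1) = 1 - q + q * exp s := by
    rw [← sum_filter_add_sum_filter_not univ P w] at hw1
    simp only [mul_ite, mul_one, sum_ite, ← sum_mul]
    linarith
  calc _ ≤ ∑ A : Fin n → α, exp (-(s * t * n)) * ((∏ v, w (A v)) * exp (s * #{v | P (A v)})) :=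
        sum_le_sum fun A _ => markov A
    _ = exp (-(s * t * n)) * (1 - q + q * exp s) ^ n := by
        rw [← mul_sum, sum_prod_mul_exp_card_eq, mgf_eq]
    _ ≤ exp (-(s * t * n)) * exp (q * s + s ^ 2 / 8) ^ n := by
        have hmgf_nonneg : 0 ≤ 1 - q + q * exp s := by nlinarith [hq.1, hq.2, exp_pos s]
        gcongr
        exact one_sub_add_mul_exp_le hq s
    _ = exp (-2 * (t - q) ^ 2 * n) := by
        rw [← exp_nat_mul, ← exp_add]
        congr 1
        simp only [s]
        ring

end Chernoff

section Ballots

variable {m : ℕ} {p : ℝ}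

def ballotWeight (m : ℕ) (p : ℝ) (S : Finset (Fin m)) : ℝ := p ^ #S * (1 - p) ^ (m - #S)

lemma erProb_eq_sum_indicator (n : ℕ) (E : Set (Fin n → Finset (Fin m))) :
    erProb n m p E = ∑ A : Fin n → Finset (Fin m),
      E.indicator (fun B => ∏ v, ballotWeight m p (B v)) A := rfl

lemma ballotWeight_nonneg (hp : p ∈ Set.Icc 0 1) (S : Finset (Fin m)) :
    0 ≤ ballotWeight m p S :=
  mul_nonneg (pow_nonneg hp.1 _) (pow_nonneg (sub_nonneg.2 hp.2) _)

lemma sum_ballotWeight : ∑ S, ballotWeight m p S = 1 := by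
  simpa [ballotWeight] using Fintype.sum_pow_mul_eq_add_pow (Fin m) p (1 - p)

lemma sum_ballotWeight_superset (L : Finset (Fin m)) :
    ∑ S with L ⊆ S, ballotWeight m p S = p ^ #L := by
  calc ∑ S with L ⊆ S, ballotWeight m p S
      = ∑ T ∈ Lᶜ.powerset, p ^ #L * (p ^ #T * (1 - p) ^ (#Lᶜ - #T)) := by
        refine sum_nbij' (· \ L) (L ∪ ·) ?_ ?_ ?_ ?_ ?_
        · intro S _
          simp [subset_iff]
        · intro T _
          simp
        · intro S hS
          exact union_sdiff_of_subset (mem_filter.1 hS).2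
        · intro T hT
          exact union_sdiff_cancel_left (subset_compl_iff_disjoint_left.1 (mem_powerset.1 hT))
        · intro S hS
          have hLS : L ⊆ S := (mem_filter.1 hS).2
          have hLcard : #L ≤ #S := card_le_card hLS
          rw [ballotWeight, card_sdiff_of_subset hLS, card_compl, Fintype.card_fin, ← mul_assoc,
            ← pow_add, Nat.add_sub_cancel' hLcard, Nat.sub_sub_sub_cancel_right hLcard]
    _ = p ^ #L := by rw [← mul_sum, sum_pow_mul_eq_add_pow, add_sub_cancel, one_pow, mul_one]

lemma erProb_biUnion_le {n : ℕ} {ι : Type*} (hp : p ∈ Set.Icc 0 1) (s : Finset ι)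
    (E : ι → Set (Fin n → Finset (Fin m))) :
    erProb n m p (⋃ i ∈ s, E i) ≤ ∑ i ∈ s, erProb n m p (E i) := by
  simp only [erProb_eq_sum_indicator]
  rw [sum_comm]
  refine sum_le_sum fun A _ => ?_
  have hterm (i : ι) : 0 ≤ (E i).indicator (fun B => ∏ v, ballotWeight m p (B v)) A :=
    Set.indicator_nonneg (fun B _ => prod_nonneg fun v _ => ballotWeight_nonneg hp _) A
  by_cases hA : A ∈ ⋃ i ∈ s, E i
  · obtain ⟨i, hi, hAi⟩ := Set.mem_iUnion₂.1 hA
    rw [Set.indicator_of_mem hA]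
    exact (Set.indicator_of_mem hAi _).symm.trans_le (single_le_sum (fun i _ => hterm i) hi)
  · rw [Set.indicator_of_notMem hA]
    exact sum_nonneg fun i _ => hterm i

lemma erProb_card_superset_ge_le (n : ℕ) (hp : p ∈ Set.Icc 0 1) (L : Finset (Fin m)) {t : ℝ}
    (ht : p ^ #L ≤ t) :
    erProb n m p {A | t * n ≤ #{v | L ⊆ A v}} ≤ exp (-2 * (t - p ^ #L) ^ 2 * n) := by
  rw [erProb_eq_sum_indicator, ← sum_ballotWeight_superset L]
  exact sum_indicator_card_ge_le (L ⊆ ·) (ballotWeight_nonneg hp) sum_ballotWeight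
    ((sum_ballotWeight_superset L).trans_le ht)

end Ballots

theorem cohesive_group_unlikely_general (n m k ℓ : ℕ)
    (p : ℝ) (hp : p ∈ Set.Icc (0:ℝ) 1) (hpl : p ^ ℓ < (ℓ:ℝ) / (k:ℝ)) :
    erProb n m p
        {A | ∃ L : Finset (Fin m), L.card = ℓ ∧
          (ℓ:ℝ) * (n:ℝ) / (k:ℝ) ≤ ((Finset.univ.filter fun v => L ⊆ A v).card : ℝ)}
      ≤ (Nat.choose m ℓ : ℝ) * Real.exp (-2 * ((ℓ:ℝ) / (k:ℝ) - p ^ ℓ) ^ 2 * (n:ℝ)) := by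
  have hevent : {A : Fin n → Finset (Fin m) | ∃ L : Finset (Fin m), L.card = ℓ ∧
      (ℓ:ℝ) * n / k ≤ #{v | L ⊆ A v}} =
      ⋃ L ∈ powersetCard ℓ univ, {A | (ℓ / k : ℝ) * n ≤ #{v | L ⊆ A v}} := by
    ext A
    simp [div_mul_eq_mul_div]
  calc _ ≤ ∑ L ∈ powersetCard ℓ univ, erProb n m p {A | (ℓ / k : ℝ) * n ≤ #{v | L ⊆ A v}} :=
        hevent ▸ erProb_biUnion_le hp _ _
    _ ≤ ∑ L ∈ powersetCard ℓ (univ : Finset (Fin m)), exp (-2 * ((ℓ / k : ℝ) - p ^ ℓ) ^ 2 * n) := by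
        refine sum_le_sum fun L hL => ?_
        obtain rfl := mem_powersetCard_univ.1 hL
        exact erProb_card_superset_ge_le n hp L hpl.le
    _ = _ := by simp

theorem cohesive_group_unlikely (n m k ℓ : ℕ) (hn : 1 ≤ n) (hm : 1 ≤ m)
    (hk : 1 ≤ k) (hℓ : 1 ≤ ℓ) (hℓk : ℓ ≤ k) (hℓm : ℓ ≤ m)
    (p : ℝ) (hp : p ∈ Set.Icc (0:ℝ) 1) (hpl : p ^ ℓ < (ℓ:ℝ) / (k:ℝ)) :
    erProb n m p
        {A | ∃ L : Finset (Fin m), L.card = ℓ ∧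
          (ℓ:ℝ) * (n:ℝ) / (k:ℝ) ≤ ((Finset.univ.filter fun v => L ⊆ A v).card : ℝ)}
      ≤ (Nat.choose m ℓ : ℝ) * Real.exp (-2 * ((ℓ:ℝ) / (k:ℝ) - p ^ ℓ) ^ 2 * (n:ℝ)) :=
  cohesive_group_unlikely_general n m k ℓ p hp hpl
end
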